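/- arXiv:1007.1663 — 4 statements merged into one kernel-verified Lean document; each statement's English description precedes it below -/
import Mathlib

section
/- If α = (α_t)_{t∈[1,∞)} is an asymptotic homomorphism from a C*-algebra A to a C*-algebra B (i.e. t ↦ α_t(a) is continuous for every a, and asymptotically α_t is linear, multiplicative and *-preserving), then for every a ∈ A one has limsup_{t→∞} ‖α_t(a)‖ ≤ ‖a‖; in particular sup_{t∈[1,∞)} ‖α_t(a)‖ < ∞ for all a ∈ A. -/
open Filter Topology

/-- An asymptotic homomorphism `α : A → B` between C*-algebras: a family of maps
`α_t : A → B`, `t ∈ [1,∞)`, such that `t ↦ α_t a` is continuous and `α_t` is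
asymptotically linear, multiplicative and star-preserving. -/
structure AsymptoticHom (A B : Type*) [NonUnitalCStarAlgebra A] [NonUnitalCStarAlgebra B] where
  toFun : ℝ → A → B
  continuous' : ∀ a : A, ContinuousOn (fun t => toFun t a) (Set.Ici (1 : ℝ))
  add_lim : ∀ a b : A,
    Tendsto (fun t => toFun t (a + b) - toFun t a - toFun t b) atTop (𝓝 0)
  smul_lim : ∀ (z : ℂ) (a : A),
    Tendsto (fun t => toFun t (z • a) - z • toFun t a) atTop (𝓝 0)
  mul_lim : ∀ a b : A,
    Tendsto (fun t => toFun t (a * b) - toFun t a * toFun t b) atTop (𝓝 0)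
  star_lim : ∀ a : A,
    Tendsto (fun t => toFun t (star a) - star (toFun t a)) atTop (𝓝 0)

lemma decomp_aux {A : Type*} [NonUnitalCStarAlgebra A] (a : A)
    {r : ℝ} (hr : ‖star a * a‖ ≤ r) (hr0 : 0 < r) :
    ∃ s : A, IsSelfAdjoint s ∧ star a * a = (2 * Real.sqrt r) • s - s * s := by
  set c : A := star a * a with hc_def
  set f : ℝ → ℝ := fun x => Real.sqrt r - Real.sqrt (r - x) with hf_def
  have hf : Continuous f :=
    continuous_const.sub (Real.continuous_sqrt.comp (continuous_const.sub continuous_id))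
  have hf0 : f 0 = 0 := by simp [hf_def]
  have hc_sa : IsSelfAdjoint c := IsSelfAdjoint.star_mul_self a
  refine ⟨cfcₙ f c, cfcₙ_predicate f c, ?_⟩
  have hspec : ∀ x ∈ quasispectrum ℝ c, 0 ≤ x ∧ x ≤ r := by
    intro x hx
    rw [Unitization.quasispectrum_eq_spectrum_inr' ℝ ℂ] at hx
    have hcast : (c : Unitization ℂ A) = star (a : Unitization ℂ A) * (a : Unitization ℂ A) := by
      rw [hc_def, Unitization.inr_mul, Unitization.inr_star]
    constructor
    · rw [hcast] at hx
      exact spectrum_star_mul_self_nonneg x hx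
    · have h1 : ‖x‖ ≤ ‖(c : Unitization ℂ A)‖ := spectrum.norm_le_norm_of_mem hx
      rw [Unitization.norm_inr] at h1
      calc x ≤ |x| := le_abs_self x
        _ = ‖x‖ := rfl
        _ ≤ ‖c‖ := h1
        _ ≤ r := hr
  have key : cfcₙ (fun x => 2 * Real.sqrt r * f x - f x * f x) c
      = (2 * Real.sqrt r) • cfcₙ f c - cfcₙ f c * cfcₙ f c := by
    rw [cfcₙ_sub (fun x => 2 * Real.sqrt r * f x) (fun x => f x * f x) c
        (by fun_prop) (by simp [hf0]) (by fun_prop) (by simp [hf0]),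
      cfcₙ_const_mul _ _ c (by fun_prop) hf0,
      cfcₙ_mul _ _ c (by fun_prop) hf0 (by fun_prop) hf0]
  have key2 : cfcₙ (fun x => 2 * Real.sqrt r * f x - f x * f x) c = c := by
    conv_rhs => rw [← cfcₙ_id ℝ c]
    apply cfcₙ_congr
    intro x hx
    obtain ⟨hx0, hxr⟩ := hspec x hx
    have h1 : Real.sqrt (r - x) ^ 2 = r - x := Real.sq_sqrt (by linarith)
    have h2 : Real.sqrt r ^ 2 = r := Real.sq_sqrt hr0.le
    simp only [hf_def, id_eq]
    nlinarith [Real.sqrt_nonneg r, Real.sqrt_nonneg (r - x)]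
  rw [← key, key2]

lemma unitization_bound {B : Type*} [NonUnitalCStarAlgebra B] (y h η : B)
    (hh : IsSelfAdjoint h) {r : ℝ} (hr0 : 0 ≤ r)
    (heq : star y * y = (2 * Real.sqrt r) • h - h * h + η) :
    ‖y‖ ^ 2 ≤ r + ‖η‖ ∧ ‖h‖ ≤ Real.sqrt r + Real.sqrt (r + ‖η‖) := by
  letI inst1 : PartialOrder (Unitization ℂ B) := CStarAlgebra.spectralOrder _
  letI inst2 : StarOrderedRing (Unitization ℂ B) := CStarAlgebra.spectralOrderedRing _
  set H : Unitization ℂ B := (h : Unitization ℂ B) with hH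
  set Y : Unitization ℂ B := (y : Unitization ℂ B) with hY
  set T : Unitization ℂ B := algebraMap ℝ (Unitization ℂ B) (Real.sqrt r) with hT
  have hTH : T * H = Real.sqrt r • H := (Algebra.smul_def _ _).symm
  have hHT : H * T = Real.sqrt r • H := by rw [← Algebra.commutes (Real.sqrt r) H, hTH]
  have hTT : T * T = algebraMap ℝ (Unitization ℂ B) r := by
    rw [hT, ← map_mul, Real.mul_self_sqrt hr0]
  have hP : star Y * Y = (2 * Real.sqrt r) • H - H * H + (η : Unitization ℂ B) := by
    rw [hY, hH, ← Unitization.inr_star, ← Unitization.inr_mul, heq]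
    rw [Unitization.inr_add, Unitization.inr_sub, Unitization.inr_mul, Unitization.inr_smul]
  have key : star Y * Y + (T - H) * (T - H) = algebraMap ℝ (Unitization ℂ B) r
      + (η : Unitization ℂ B) := by
    rw [hP, mul_sub, sub_mul, sub_mul, hTT, hTH, hHT]
    have h2 : (2 * Real.sqrt r) • H = Real.sqrt r • H + Real.sqrt r • H := by
      rw [two_mul, add_smul]
    rw [h2]; abel
  have hy_pos : 0 ≤ star Y * Y := star_mul_self_nonneg _
  have hT_sa : IsSelfAdjoint T := by
    rw [hT, IsSelfAdjoint, ← algebraMap_star_comm, star_trivial]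
  have hX_sa : IsSelfAdjoint (T - H) := hT_sa.sub (hh.inr ℂ)
  have hX_pos : 0 ≤ (T - H) * (T - H) := by
    have := star_mul_self_nonneg (T - H)
    rwa [hX_sa.star_eq] at this
  have hbig : ‖algebraMap ℝ (Unitization ℂ B) r + (η : Unitization ℂ B)‖ ≤ r + ‖η‖ := by
    refine (norm_add_le _ _).trans ?_
    rw [norm_algebraMap', Unitization.norm_inr, Real.norm_of_nonneg hr0]
  have h1 : star Y * Y ≤ algebraMap ℝ (Unitization ℂ B) r + (η : Unitization ℂ B) := by
    rw [eq_sub_of_add_eq key]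
    exact sub_le_self _ hX_pos
  have h2 : (T - H) * (T - H) ≤ algebraMap ℝ (Unitization ℂ B) r + (η : Unitization ℂ B) := by
    rw [eq_sub_of_add_eq' key]
    exact sub_le_self _ hy_pos
  have hyn : ‖y‖ ^ 2 ≤ r + ‖η‖ := by
    have : ‖star Y * Y‖ ≤ r + ‖η‖ :=
      (CStarAlgebra.norm_le_norm_of_nonneg_of_le hy_pos h1).trans hbig
    rwa [hY, ← Unitization.inr_star, ← Unitization.inr_mul, Unitization.norm_inr,
      CStarRing.norm_star_mul_self, ← sq] at this
  refine ⟨hyn, ?_⟩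
  have hXn : ‖T - H‖ ≤ Real.sqrt (r + ‖η‖) := by
    have hn : ‖(T - H) * (T - H)‖ ≤ r + ‖η‖ :=
      (CStarAlgebra.norm_le_norm_of_nonneg_of_le hX_pos h2).trans hbig
    nth_rewrite 1 [← hX_sa.star_eq] at hn
    rw [CStarRing.norm_star_mul_self, ← sq] at hn
    exact (Real.le_sqrt (norm_nonneg _) (by positivity)).mpr hn
  have hhH : ‖h‖ = ‖H‖ := (Unitization.norm_inr _).symm
  rw [hhH]
  calc ‖H‖ = ‖T - (T - H)‖ := by congr 1; abel
    _ ≤ ‖T‖ + ‖T - H‖ := norm_sub_le _ _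
    _ ≤ Real.sqrt r + Real.sqrt (r + ‖η‖) := by
        refine add_le_add ?_ hXn
        rw [hT, norm_algebraMap', Real.norm_of_nonneg (Real.sqrt_nonneg r)]

lemma eta_norm_bound {B : Type*} [NonUnitalCStarAlgebra B] (η e4 e1 e2 u w h k : B)
    {sr : ℝ} (hsr : 0 ≤ sr)
    (heq : η = e4 - e1 - e2 * u + (2 * sr) • w - h * w - w * h - w * w)
    (hw : ‖w‖ ≤ 2⁻¹ * ‖k‖) :
    ‖η‖ ≤ ‖e4‖ + ‖e1‖ + ‖e2‖ * ‖u‖ + sr * ‖k‖ + ‖k‖ * ‖h‖ + ‖k‖ * ‖k‖ := by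
  have peel : ‖η‖ ≤ ‖e4‖ + ‖e1‖ + ‖e2 * u‖ + (2 * sr) * ‖w‖
      + ‖h * w‖ + ‖w * h‖ + ‖w * w‖ := by
    rw [heq]
    refine (norm_sub_le _ _).trans (add_le_add ?_ le_rfl)
    refine (norm_sub_le _ _).trans (add_le_add ?_ le_rfl)
    refine (norm_sub_le _ _).trans (add_le_add ?_ le_rfl)
    refine (norm_add_le _ _).trans (add_le_add ?_ ?_)
    · refine (norm_sub_le _ _).trans (add_le_add ?_ le_rfl)
      exact norm_sub_le _ _
    · rw [norm_smul, Real.norm_of_nonneg (by positivity)]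
  have m1 : ‖e2 * u‖ ≤ ‖e2‖ * ‖u‖ := norm_mul_le _ _
  have m2 : ‖h * w‖ ≤ ‖h‖ * ‖w‖ := norm_mul_le _ _
  have m3 : ‖w * h‖ ≤ ‖w‖ * ‖h‖ := norm_mul_le _ _
  have m4 : ‖w * w‖ ≤ ‖w‖ * ‖w‖ := norm_mul_le _ _
  have hk0 : (0:ℝ) ≤ ‖k‖ := norm_nonneg _
  have hh0 : (0:ℝ) ≤ ‖h‖ := norm_nonneg _
  have hw0 : (0:ℝ) ≤ ‖w‖ := norm_nonneg _
  nlinarith [mul_le_mul_of_nonneg_left hw hsr, mul_le_mul_of_nonneg_left hw hh0,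
    mul_le_mul_of_nonneg_right hw hh0, mul_le_mul hw hw hw0 (by positivity : (0:ℝ) ≤ 2⁻¹ * ‖k‖)]

lemma eta_theta {E1 E2 E4 Kn H M Q sr θ : ℝ}
    (h : Q ≤ E4 + E1 + E2 * M + sr * Kn + Kn * H + Kn * Kn)
    (hE1 : E1 ≤ θ) (hE2 : E2 ≤ θ) (hE4 : E4 ≤ θ) (hKn : Kn ≤ θ)
    (hKn0 : 0 ≤ Kn) (hM0 : 0 ≤ M) (hH0 : 0 ≤ H) (hsr : 0 ≤ sr)
    (hθ0 : 0 ≤ θ) (hθ1 : θ ≤ 1) :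
    Q ≤ θ * ((4 + sr) + H + M) := by
  nlinarith [mul_le_mul_of_nonneg_right hE2 hM0, mul_le_mul_of_nonneg_left hKn hsr,
    mul_le_mul_of_nonneg_right hKn hH0, mul_le_mul hKn hKn hKn0 hθ0]

lemma real_key {r M H Q θ δ : ℝ} (hr0 : 0 < r) (hM0 : 0 ≤ M) (hH0 : 0 ≤ H) (hQ0 : 0 ≤ Q)
    (hB1 : M ^ 2 ≤ r + Q) (hB2 : H ≤ Real.sqrt r + Real.sqrt (r + Q))
    (hηb : Q ≤ θ * ((4 + Real.sqrt r) + H + M))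
    (hθ0 : 0 < θ) (hθhalf : θ ≤ 2⁻¹)
    (hθD : θ * ((4 + Real.sqrt r) + Real.sqrt r
      + 2 * (r + (4 + Real.sqrt r) + Real.sqrt r + 1)) ≤ δ) :
    M ^ 2 ≤ r + δ := by
  set sr := Real.sqrt r with hsr_def
  have hsr0 : 0 ≤ sr := Real.sqrt_nonneg r
  set q := Real.sqrt (r + Q) with hq_def
  have hq0 : 0 ≤ q := Real.sqrt_nonneg _
  have hq2 : q ^ 2 = r + Q := Real.sq_sqrt (by positivity)
  have hMq : M ≤ q := (Real.le_sqrt hM0 (by positivity)).mpr hB1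
  have hQq : Q ≤ θ * ((4 + sr) + sr + 2 * q) := by
    refine hηb.trans ?_
    refine mul_le_mul_of_nonneg_left ?_ hθ0.le
    have : H ≤ sr + q := hB2
    linarith
  have hθ1 : θ ≤ 1 := by linarith
  have hquad : q ^ 2 ≤ (r + (4 + sr) + sr) + q := by
    rw [hq2]
    nlinarith [mul_le_mul_of_nonneg_right hθhalf hq0]
  have hqK : q ≤ r + (4 + sr) + sr + 1 := by nlinarith [sq_nonneg (q - 1)]
  have hQδ : Q ≤ δ := by
    refine le_trans ?_ hθD
    refine hQq.trans (mul_le_mul_of_nonneg_left ?_ hθ0.le)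
    linarith
  nlinarith
private lemma eventual_bound {A B : Type*} [NonUnitalCStarAlgebra A] [NonUnitalCStarAlgebra B]
    (α : AsymptoticHom A B) (a : A) {ε : ℝ} (hε : 0 < ε) :
    ∀ᶠ t in atTop, ‖α.toFun t a‖ ≤ ‖a‖ + ε := by
  set r : ℝ := (‖a‖ + ε / 2) ^ 2 with hr_def
  have hr0 : 0 < r := by positivity
  have hr : ‖star a * a‖ ≤ r := by
    rw [CStarRing.norm_star_mul_self, hr_def]
    nlinarith [norm_nonneg a]
  obtain ⟨s, hs_sa, hs_eq⟩ := decomp_aux a hr hr0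
  set b : ℝ → B := fun t => α.toFun t s with hb_def
  set k : ℝ → B := fun t => b t - star (b t) with hk_def
  set w : ℝ → B := fun t => (2⁻¹ : ℝ) • k t with hw_def
  set h : ℝ → B := fun t => b t - w t with hh_def
  set η : ℝ → B := fun t =>
    star (α.toFun t a) * α.toFun t a - ((2 * Real.sqrt r) • h t - h t * h t) with hη_def
  set e1 : ℝ → B := fun t => α.toFun t (star a * a) - α.toFun t (star a) * α.toFun t a
    with he1_def
  set e2 : ℝ → B := fun t => α.toFun t (star a) - star (α.toFun t a) with he2_def
  set e4 : ℝ → B := fun t => α.toFun t (star a * a) - ((2 * Real.sqrt r) • b t - b t * b t)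
    with he4_def
  have hsr0 : (0:ℝ) ≤ Real.sqrt r := Real.sqrt_nonneg r
  -- self-adjointness of h t
  have hh_sa : ∀ t, IsSelfAdjoint (h t) := by
    intro t
    simp only [hh_def, hw_def, hk_def, IsSelfAdjoint, star_sub, star_smul, star_star,
      star_trivial]
    module
  -- the basic norm bounds from the unitization
  have hbound : ∀ t, ‖α.toFun t a‖ ^ 2 ≤ r + ‖η t‖ ∧
      ‖h t‖ ≤ Real.sqrt r + Real.sqrt (r + ‖η t‖) := by
    intro t
    exact unitization_bound _ _ _ (hh_sa t) hr0.le (eq_add_of_sub_eq' rfl)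
  -- the identity for η
  have hη_eq : ∀ t, η t = e4 t - e1 t - e2 t * α.toFun t a + (2 * Real.sqrt r) • w t
      - h t * w t - w t * h t - w t * w t := by
    intro t
    simp only [hη_def, he4_def, he1_def, he2_def, hh_def]
    simp only [mul_sub, sub_mul, smul_sub]
    abel
  -- the norm bound for η
  have hη_norm : ∀ t, ‖η t‖ ≤ ‖e4 t‖ + ‖e1 t‖ + ‖e2 t‖ * ‖α.toFun t a‖
      + Real.sqrt r * ‖k t‖ + ‖k t‖ * ‖h t‖ + ‖k t‖ * ‖k t‖ := by
    intro t
    refine eta_norm_bound _ _ _ _ _ _ _ _ hsr0 (hη_eq t) ?_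
    rw [hw_def]
    simp [norm_smul]
  -- the error terms tend to zero
  have he1 : Tendsto e1 atTop (𝓝 0) := α.mul_lim (star a) a
  have he2 : Tendsto e2 atTop (𝓝 0) := α.star_lim a
  have hk_lim : Tendsto k atTop (𝓝 0) := by
    have := α.star_lim s
    rw [hs_sa.star_eq] at this
    exact this
  have he4 : Tendsto e4 atTop (𝓝 0) := by
    have hA1 := α.add_lim ((2 * Real.sqrt r : ℝ) • s) (-(s * s))
    have hA2 := α.smul_lim ((2 * Real.sqrt r : ℝ) : ℂ) s
    have hA3 := α.smul_lim (-1 : ℂ) (s * s)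
    have hA4 := α.mul_lim s s
    rw [Complex.coe_smul] at hA2
    have hsum := ((hA1.add hA2).add hA3).sub hA4
    rw [show (0:B) + 0 + 0 - 0 = 0 by abel] at hsum
    have hfe : e4 = fun t =>
        (α.toFun t ((2 * Real.sqrt r : ℝ) • s + -(s * s))
            - α.toFun t ((2 * Real.sqrt r : ℝ) • s) - α.toFun t (-(s * s))
          + (α.toFun t ((2 * Real.sqrt r : ℝ) • s) - (2 * Real.sqrt r : ℝ) • α.toFun t s)
          + (α.toFun t ((-1 : ℂ) • (s * s)) - (-1 : ℂ) • α.toFun t (s * s)))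
          - (α.toFun t (s * s) - α.toFun t s * α.toFun t s) := by
      funext t
      have hc' : star a * a = (2 * Real.sqrt r : ℝ) • s + -(s * s) := by
        rw [hs_eq]; abel
      simp only [he4_def, hb_def, hc', neg_smul, one_smul]
      abel
    rw [hfe]
    exact hsum
  -- quantitative eventual bound
  set δ : ℝ := ε ^ 2 / 2 with hδ_def
  have hδ0 : 0 < δ := by positivity
  set D : ℝ := (4 + Real.sqrt r) + Real.sqrt r
      + 2 * (r + (4 + Real.sqrt r) + Real.sqrt r + 1) with hD_def
  have hD0 : 0 < D := by rw [hD_def]; linarith only [hr0, hsr0]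
  set θ : ℝ := min 2⁻¹ (δ / D) with hθ_def
  have hθ0 : 0 < θ := lt_min (by norm_num) (by positivity)
  have hθhalf : θ ≤ 2⁻¹ := min_le_left _ _
  have hθD : θ * D ≤ δ := by
    calc θ * D ≤ (δ / D) * D := mul_le_mul_of_nonneg_right (min_le_right _ _) hD0.le
      _ = δ := by field_simp
  have hsmall : ∀ᶠ t in atTop,
      ‖e1 t‖ ≤ θ ∧ ‖e2 t‖ ≤ θ ∧ ‖e4 t‖ ≤ θ ∧ ‖k t‖ ≤ θ := by
    filter_upwards [(NormedAddCommGroup.tendsto_nhds_zero.mp he1) θ hθ0,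
      (NormedAddCommGroup.tendsto_nhds_zero.mp he2) θ hθ0,
      (NormedAddCommGroup.tendsto_nhds_zero.mp he4) θ hθ0,
      (NormedAddCommGroup.tendsto_nhds_zero.mp hk_lim) θ hθ0] with t h1 h2 h3 h4
    exact ⟨h1.le, h2.le, h3.le, h4.le⟩
  filter_upwards [hsmall] with t ht
  obtain ⟨ht1, ht2, ht3, ht4⟩ := ht
  obtain ⟨hB1, hB2⟩ := hbound t
  have hηb : ‖η t‖ ≤ θ * ((4 + Real.sqrt r) + ‖h t‖ + ‖α.toFun t a‖) :=
    eta_theta (hη_norm t) ht1 ht2 ht3 ht4 (norm_nonneg _) (norm_nonneg _) (norm_nonneg _)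
      hsr0 hθ0.le (hθhalf.trans (by norm_num))
  have hfinal : ‖α.toFun t a‖ ^ 2 ≤ r + δ :=
    real_key hr0 (norm_nonneg _) (norm_nonneg _) (norm_nonneg _) hB1 hB2 hηb hθ0 hθhalf hθD
  have hfinal2 : ‖α.toFun t a‖ ^ 2 ≤ (‖a‖ + ε) ^ 2 := by
    rw [hr_def, hδ_def] at hfinal
    nlinarith only [hfinal, norm_nonneg a, hε.le, hε]
  exact le_of_pow_le_pow_left₀ two_ne_zero (by positivity) hfinal2

/-- If `α` is an asymptotic homomorphism from `A` to `B`, then for every `a ∈ A`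
one has `limsup_{t→∞} ‖α_t(a)‖ ≤ ‖a‖`; in particular `sup_{t ∈ [1,∞)} ‖α_t(a)‖ < ∞`. -/
theorem asymptoticHom_limsup_norm_le (A B : Type*)
    [NonUnitalCStarAlgebra A] [NonUnitalCStarAlgebra B]
    (α : AsymptoticHom A B) (a : A) :
    limsup (fun t => ‖α.toFun t a‖) atTop ≤ ‖a‖ ∧
      ∃ C : ℝ, ∀ t ∈ Set.Ici (1 : ℝ), ‖α.toFun t a‖ ≤ C := by
  have key : ∀ {ε : ℝ}, 0 < ε → ∀ᶠ t in atTop, ‖α.toFun t a‖ ≤ ‖a‖ + ε :=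
    fun hε => eventual_bound α a hε
  constructor
  · have cobdd : IsCoboundedUnder (· ≤ ·) atTop (fun t => ‖α.toFun t a‖) :=
      isCoboundedUnder_le_of_le atTop (fun t => norm_nonneg _)
    by_contra hlt
    push_neg at hlt
    have h2 : limsup (fun t => ‖α.toFun t a‖) atTop
        ≤ ‖a‖ + (limsup (fun t => ‖α.toFun t a‖) atTop - ‖a‖) / 2 :=
      limsup_le_of_le cobdd (key (by linarith))
    linarith
  · obtain ⟨T, hT⟩ := eventually_atTop.mp (key one_pos)
    have hcont : ContinuousOn (fun t => α.toFun t a) (Set.Icc (1:ℝ) (max T 1)) :=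
      (α.continuous' a).mono Set.Icc_subset_Ici_self
    have hbdd : BddAbove ((fun t => ‖α.toFun t a‖) '' Set.Icc (1:ℝ) (max T 1)) :=
      isCompact_Icc.bddAbove_image (continuous_norm.comp_continuousOn hcont)
    obtain ⟨C₀, hC₀⟩ := hbdd
    refine ⟨max C₀ (‖a‖ + 1), fun t ht => ?_⟩
    rcases le_total t (max T 1) with hle | hge
    · exact (hC₀ (Set.mem_image_of_mem _ ⟨ht, hle⟩)).trans (le_max_left _ _)
    · exact (hT t ((le_max_left T 1).trans hge)).trans (le_max_right _ _)
end

section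
/- Let D be a C*-algebra containing a σ-unital closed two-sided ideal D₀, let q : D → D/D₀ be the quotient map, and let A be a separable C*-algebra. If φ = (φ_t)_{t∈[1,∞)} : A → D/D₀ is a uniformly continuous, equi-continuous asymptotic homomorphism, then there exists a family of maps φ̄_t : A → D, t ∈ [1,∞), such that (i) q ∘ φ̄_t = φ_t for all t; (ii) the family (φ̄_t) is equi-continuous; (iii) t ↦ φ̄_t(a) is uniformly continuous for all a ∈ A; (iv) sup_{t∈[1,∞)} ‖φ̄_t(a)‖ < ∞ for all a ∈ A. -/
/-!
Extend `φ` to `t < 1` by `φ₁` and let `U(E)` be the Banach space of bounded uniformly continuous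
functions `ℝ → E`. Equicontinuity, uniform continuity in `t` and boundedness together say that
`a ↦ φ_•(a)` is a continuous map `A → U(C)`, and the required properties of `φ̄` say the same
with `U(D)`. So it suffices to lift continuous maps `A → U(C)` continuously through
`q_* : U(D) → U(C)`.

By the open mapping theorem `q` has preimages of norm `≤ K ‖c‖`. Lifting the values of
`h ∈ U(C)` on a grid of mesh `η` and averaging the resulting step function over windows of
length `η` gives an approximate preimage of `h` under `q_*`, with the same norm control.
A partition of unity on the paracompact space `A` glues such approximate preimages into a
continuous approximate lift, and a geometric series of corrections makes it exact, as in the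
proof of the Bartle–Graves theorem.
-/

open Filter Topology

section

open Set Metric MeasureTheory

namespace BoundedContinuousFunction

section UniformlyContinuous

variable (𝕜 α β : Type*) [NormedField 𝕜] [UniformSpace α] [SeminormedAddCommGroup β]
  [NormedSpace 𝕜 β]

def uniformlyContinuousSubmodule : Submodule 𝕜 (α →ᵇ β) where
  carrier := {f | UniformContinuous f}
  add_mem' hf hg := hf.add hg
  zero_mem' := uniformContinuous_const
  smul_mem' c _ hf := hf.const_smul c

theorem isClosed_uniformlyContinuousSubmodule :
    IsClosed (uniformlyContinuousSubmodule 𝕜 α β : Set (α →ᵇ β)) :=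
  isClosed_of_closure_subset fun _ hf ↦
    let ⟨_, hF, hFf⟩ := mem_closure_iff_seq_limit.1 hf
    (tendsto_iff_tendstoUniformly.1 hFf).uniformContinuous (.of_forall hF)

instance [CompleteSpace β] : CompleteSpace (uniformlyContinuousSubmodule 𝕜 α β) :=
  (isClosed_uniformlyContinuousSubmodule 𝕜 α β).completeSpace_coe

end UniformlyContinuous

theorem continuous_iff_equicontinuous {X α β : Type*} [TopologicalSpace X] [TopologicalSpace α]
    [PseudoMetricSpace β] {Ψ : X → α →ᵇ β} :
    Continuous Ψ ↔ Equicontinuous fun t x ↦ Ψ x t := by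
  rw [equicontinuous_iff_continuous, isInducing_coeFn.continuous_iff]
  rfl

theorem exists_continuousMap_uniformlyContinuousSubmodule {𝕜 X α β : Type*} [NormedField 𝕜]
    [TopologicalSpace X] [UniformSpace α] [SeminormedAddCommGroup β] [NormedSpace 𝕜 β]
    {F : X → α → β} (huc : ∀ x, UniformContinuous (F x)) (hbdd : ∀ x, ∃ M, ∀ t, ‖F x t‖ ≤ M)
    (heq : Equicontinuous fun t x ↦ F x t) :
    ∃ Φ : C(X, uniformlyContinuousSubmodule 𝕜 α β), ∀ x t, (Φ x : α →ᵇ β) t = F x t := by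
  choose M hM using hbdd
  let Φ : X → α →ᵇ β := fun x ↦ .ofNormedAddCommGroup (F x) (huc x).continuous (M x) (hM x)
  exact ⟨⟨fun x ↦ ⟨Φ x, huc x⟩, (continuous_iff_equicontinuous.2 heq).subtype_mk _⟩,
    fun _ _ ↦ rfl⟩

end BoundedContinuousFunction

open BoundedContinuousFunction

section CompLeft

variable {𝕜 α β γ : Type*} [NontriviallyNormedField 𝕜] [UniformSpace α]
  [SeminormedAddCommGroup β] [NormedSpace 𝕜 β] [SeminormedAddCommGroup γ] [NormedSpace 𝕜 γ]

noncomputable def ContinuousLinearMap.compLeftUniformlyContinuous (g : β →L[𝕜] γ) :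
    uniformlyContinuousSubmodule 𝕜 α β →L[𝕜] uniformlyContinuousSubmodule 𝕜 α γ :=
  ((g.compLeftContinuousBounded α).comp (Submodule.subtypeL _)).codRestrict _
    fun f ↦ g.uniformContinuous.comp f.2

@[simp]
theorem ContinuousLinearMap.compLeftUniformlyContinuous_apply (g : β →L[𝕜] γ)
    (f : uniformlyContinuousSubmodule 𝕜 α β) (t : α) :
    (g.compLeftUniformlyContinuous f : α →ᵇ γ) t = g ((f : α →ᵇ β) t) :=
  rfl

end CompLeft

section ContinuousLift

variable {X E F : Type*} [TopologicalSpace X] [NormalSpace X] [ParacompactSpace X]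
  [NormedAddCommGroup E] [NormedSpace ℝ E] [NormedAddCommGroup F] [NormedSpace ℝ F]
  {T : E →L[ℝ] F} {K : ℝ}

theorem ContinuousLinearMap.exists_continuous_approx_lift
    (hT : ∀ y : F, ∀ ε > 0, ∃ x, ‖T x - y‖ < ε ∧ ‖x‖ < K * ‖y‖ + ε)
    (Φ : C(X, F)) {ε : ℝ} (hε : 0 < ε) :
    ∃ Ψ : C(X, E), ∀ x, ‖T (Ψ x) - Φ x‖ < ε ∧ ‖Ψ x‖ < K * ‖Φ x‖ + ε := by
  obtain ⟨Ψ, hΨ⟩ := exists_continuous_forall_mem_convex_of_local_const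
    (t := fun x ↦ T ⁻¹' ball (Φ x) ε ∩ ball 0 (K * ‖Φ x‖ + ε))
    (fun x ↦ ((convex_ball _ _).linear_preimage T.toLinearMap).inter (convex_ball _ _))
    fun x₀ ↦ by
      obtain ⟨e, he⟩ := hT (Φ x₀) ε hε
      rw [← dist_eq_norm] at he
      refine ⟨e, ?_⟩
      filter_upwards [ContinuousAt.eventually_lt (f := fun y ↦ dist (T e) (Φ y)) (by fun_prop)
        continuousAt_const he.1, ContinuousAt.eventually_lt (g := fun y ↦ K * ‖Φ y‖ + ε)
        continuousAt_const (by fun_prop) he.2] with y h₁ h₂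
      exact ⟨h₁, mem_ball_zero_iff.2 h₂⟩
  exact ⟨Ψ, fun x ↦ by simpa [dist_eq_norm] using hΨ x⟩

theorem ContinuousLinearMap.exists_continuous_lift_of_approx [CompleteSpace E] (hK : 0 ≤ K)
    (hT : ∀ y : F, ∀ ε > 0, ∃ x, ‖T x - y‖ < ε ∧ ‖x‖ < K * ‖y‖ + ε) (Φ : C(X, F)) :
    ∃ Ψ : C(X, E), ∀ x, T (Ψ x) = Φ x := by
  choose step hstep using fun (R : C(X, F)) (n : ℕ) ↦
    T.exists_continuous_approx_lift hT R (ε := 2⁻¹ ^ n) (by positivity)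
  -- `R n = Φ - T ∘ (P 0 + ⋯ + P (n - 1))` is the error left after `n` corrections
  let R : ℕ → C(X, F) := fun n ↦ Nat.rec Φ (fun n Rn ↦ Rn - (T : C(E, F)).comp (step Rn n)) n
  let P : ℕ → C(X, E) := fun n ↦ step (R n) n
  have hR_succ (n : ℕ) (x : X) : R (n + 1) x = R n x - T (P n x) := rfl
  have hR_small (n : ℕ) (x : X) : ‖R (n + 1) x‖ < 2⁻¹ ^ n := by
    rw [hR_succ, norm_sub_rev]
    exact (hstep (R n) n x).1
  have hP_small (n : ℕ) (x : X) : ‖P (n + 1) x‖ ≤ (K + 1) * 2⁻¹ ^ n := by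
    calc ‖P (n + 1) x‖ ≤ K * ‖R (n + 1) x‖ + 2⁻¹ ^ (n + 1) := (hstep _ _ x).2.le
      _ ≤ K * 2⁻¹ ^ n + 2⁻¹ ^ n := add_le_add (mul_le_mul_of_nonneg_left (hR_small n x).le hK)
        (pow_le_pow_of_le_one (by norm_num) (by norm_num) n.le_succ)
      _ = (K + 1) * 2⁻¹ ^ n := by ring
  have hsum : Summable fun n : ℕ ↦ (K + 1) * (2⁻¹ : ℝ) ^ n :=
    (summable_geometric_of_lt_one (by norm_num) (by norm_num)).mul_left _
  refine ⟨⟨fun x ↦ P 0 x + ∑' n, P (n + 1) x, (P 0).continuous.add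
    (continuous_tsum (fun n ↦ (P (n + 1)).continuous) hsum hP_small)⟩, fun x ↦ ?_⟩
  have hPx : Summable fun n ↦ P (n + 1) x := .of_norm_bounded hsum (hP_small · x)
  have hpartial (n : ℕ) : T (∑ k ∈ Finset.range n, P (k + 1) x) = R 1 x - R (n + 1) x := by
    rw [map_sum]
    refine (Finset.sum_congr rfl fun k _ ↦ ?_).trans (Finset.sum_range_sub' (fun k ↦ R (k + 1) x) n)
    rw [hR_succ (k + 1)]
    abel
  have hR_lim : Tendsto (fun n ↦ R (n + 1) x) atTop (𝓝 0) :=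
    squeeze_zero_norm (fun n ↦ (hR_small n x).le)
      (tendsto_pow_atTop_nhds_zero_of_lt_one (by norm_num) (by norm_num))
  have hT_tsum : T (∑' n, P (n + 1) x) = R 1 x := by
    refine tendsto_nhds_unique ((T.continuous.tendsto _).comp hPx.hasSum.tendsto_sum_nat) ?_
    simpa only [Function.comp_def, hpartial, sub_zero] using tendsto_const_nhds.sub hR_lim
  change T (P 0 x + ∑' n, P (n + 1) x) = Φ x
  rw [map_add, hT_tsum]
  exact add_sub_cancel (T (P 0 x)) (Φ x)

end ContinuousLift

theorem uniformContinuous_intervalIntegral_add {E : Type*} [NormedAddCommGroup E] [NormedSpace ℝ E]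
    {f : ℝ → E} {M : ℝ} (hf : ∀ a b, IntervalIntegrable f volume a b) (hM : ∀ s, ‖f s‖ ≤ M)
    (η : ℝ) : UniformContinuous fun t ↦ ∫ s in t..t + η, f s := by
  refine (LipschitzWith.of_dist_le' (K := 2 * M) fun t u ↦ ?_).uniformContinuous
  rw [dist_eq_norm, intervalIntegral.integral_interval_sub_interval_comm' (hf _ _) (hf _ _)
    (hf _ _)]
  calc _ ≤ M * |t + η - (u + η)| + M * |t - u| :=
        norm_sub_le_of_le (intervalIntegral.norm_integral_le_of_norm_le_const fun s _ ↦ hM s)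
          (intervalIntegral.norm_integral_le_of_norm_le_const fun s _ ↦ hM s)
    _ = 2 * M * dist t u := by rw [Real.dist_eq, add_sub_add_right_eq_sub]; ring

theorem norm_smul_intervalIntegral_sub_le {E : Type*} [NormedAddCommGroup E] [NormedSpace ℝ E]
    [CompleteSpace E] {F : ℝ → E} {t η ε : ℝ} (hη : 0 < η)
    (hF : IntervalIntegrable F volume t (t + η)) (c : E)
    (hFc : ∀ s ∈ uIoc t (t + η), ‖F s - c‖ ≤ ε) :
    ‖(η⁻¹ • ∫ s in t..t + η, F s) - c‖ ≤ ε := by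
  have : (η⁻¹ • ∫ s in t..t + η, F s) - c = η⁻¹ • ∫ s in t..t + η, (F s - c) := by
    rw [intervalIntegral.integral_sub hF intervalIntegrable_const, intervalIntegral.integral_const,
      add_sub_cancel_left, smul_sub, smul_smul, inv_mul_cancel₀ hη.ne', one_smul]
  rw [this, norm_smul, Real.norm_of_nonneg (inv_nonneg.2 hη.le)]
  calc η⁻¹ * ‖∫ s in t..t + η, (F s - c)‖ ≤ η⁻¹ * (ε * |t + η - t|) := by
        gcongr
        exact intervalIntegral.norm_integral_le_of_norm_le_const hFc
    _ = ε := by rw [add_sub_cancel_left, abs_of_pos hη]; field_simp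

theorem abs_floor_div_mul_sub_lt {η t s : ℝ} (hη : 0 < η) (hs : s ∈ uIoc t (t + η)) :
    |⌊s / η⌋ * η - t| < 2 * η := by
  rw [uIoc_of_le (by linarith)] at hs
  have h₁ := Int.floor_le (s / η)
  have h₂ := Int.lt_floor_add_one (s / η)
  rw [le_div_iff₀ hη] at h₁
  rw [div_lt_iff₀ hη, add_one_mul] at h₂
  rw [abs_lt]
  constructor <;> linarith [hs.1, hs.2]

theorem ContinuousLinearMap.exists_uniformContinuous_approx_lift {D C : Type*}
    [NormedAddCommGroup D] [NormedSpace ℝ D] [CompleteSpace D]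
    [NormedAddCommGroup C] [NormedSpace ℝ C] [CompleteSpace C]
    (q : D →L[ℝ] C) {K : ℝ} (hK : 0 ≤ K) (hq : ∀ c, ∃ d, q d = c ∧ ‖d‖ ≤ K * ‖c‖)
    {h : ℝ → C} (hh : UniformContinuous h) {B : ℝ} (hB : ∀ t, ‖h t‖ ≤ B) {ε : ℝ} (hε : 0 < ε) :
    ∃ g : ℝ → D, UniformContinuous g ∧ (∀ t, ‖q (g t) - h t‖ ≤ ε) ∧ ∀ t, ‖g t‖ ≤ K * B := by
  obtain ⟨δ, hδ, hhδ⟩ := Metric.uniformContinuous_iff.1 hh ε hε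
  set η := δ / 2 with hη
  have hη_pos : 0 < η := half_pos hδ
  choose d hqd hd using fun k : ℤ ↦ hq (h (k * η))
  -- averaging the step function `f` over windows of length `η` makes it uniformly continuous
  set f : ℝ → D := fun s ↦ d ⌊s / η⌋
  have hf_bound (s : ℝ) : ‖f s‖ ≤ K * B := (hd _).trans (mul_le_mul_of_nonneg_left (hB _) hK)
  have hf_meas : StronglyMeasurable f :=
    StronglyMeasurable.of_discrete.comp_measurable (Int.measurable_floor.comp (by fun_prop))
  have hf_int (a b : ℝ) : IntervalIntegrable f volume a b :=
    ⟨.of_bound measure_Ioc_lt_top hf_meas.aestronglyMeasurable _ (ae_of_all _ hf_bound),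
      .of_bound measure_Ioc_lt_top hf_meas.aestronglyMeasurable _ (ae_of_all _ hf_bound)⟩
  refine ⟨fun t ↦ η⁻¹ • ∫ s in t..t + η, f s,
    (uniformContinuous_intervalIntegral_add hf_int hf_bound η).const_smul η⁻¹,
    fun t ↦ ?_, fun t ↦ ?_⟩
  · rw [map_smul, ← q.intervalIntegral_comp_comm (hf_int _ _)]
    refine norm_smul_intervalIntegral_sub_le hη_pos
      ⟨q.integrable_comp (hf_int _ _).1, q.integrable_comp (hf_int _ _).2⟩ _ fun s hs ↦ ?_
    rw [hqd, ← dist_eq_norm]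
    exact (hhδ (by rw [Real.dist_eq]; linarith [abs_floor_div_mul_sub_lt hη_pos hs])).le
  · simpa using norm_smul_intervalIntegral_sub_le hη_pos (hf_int _ _) 0 fun s _ ↦ by
      simpa using hf_bound s

theorem ContinuousLinearMap.exists_approx_preimage_compLeftUniformlyContinuous {D C : Type*}
    [NormedAddCommGroup D] [NormedSpace ℝ D] [CompleteSpace D]
    [NormedAddCommGroup C] [NormedSpace ℝ C] [CompleteSpace C]
    (q : D →L[ℝ] C) {K : ℝ} (hK : 0 ≤ K) (hq : ∀ c, ∃ d, q d = c ∧ ‖d‖ ≤ K * ‖c‖)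
    (y : uniformlyContinuousSubmodule ℝ ℝ C) {ε : ℝ} (hε : 0 < ε) :
    ∃ x, ‖q.compLeftUniformlyContinuous x - y‖ < ε ∧ ‖x‖ < K * ‖y‖ + ε := by
  obtain ⟨g, hg, hgq, hgn⟩ := q.exists_uniformContinuous_approx_lift hK hq
    (h := (y : ℝ →ᵇ C)) y.2 (fun t ↦ (y : ℝ →ᵇ C).norm_coe_le_norm t) (half_pos hε)
  refine ⟨⟨.ofNormedAddCommGroup g hg.continuous _ hgn, hg⟩, ?_, ?_⟩
  · exact ((norm_le (half_pos hε).le).2 hgq).trans_lt (half_lt_self hε)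
  · exact (norm_ofNormedAddCommGroup_le _ (mul_nonneg hK (norm_nonneg _)) hgn).trans_lt
      (lt_add_of_pos_right _ hε)

theorem UniformContinuousOn.comp_projIci {β : Type*} [UniformSpace β] {f : ℝ → β} {a : ℝ}
    (hf : UniformContinuousOn f (Ici a)) : UniformContinuous fun t ↦ f (projIci a t) :=
  (uniformContinuousOn_iff_restrict.1 hf).comp
    ((LipschitzWith.const_max LipschitzWith.id a).uniformContinuous.subtype_mk _)

end

theorem exists_uniformly_continuous_lift_general
    (A D C : Type*) [NonUnitalCStarAlgebra A] [NonUnitalCStarAlgebra C]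
    [NonUnitalCStarAlgebra D]
    (q : D →⋆ₙₐ[ℂ] C) (hq : Function.Surjective q)
    (φ : AsymptoticHom A C)
    (hequi : Equicontinuous fun t : Set.Ici (1:ℝ) => φ.toFun t)
    (hunif : ∀ a : A, UniformContinuousOn (fun t => φ.toFun t a) (Set.Ici 1))
    -- black box (Lemma 2.1 of Manuilov–Thomsen): an equi-continuous bounded lift exists
    (hlift : ∃ ψ : ℝ → A → D,
      Equicontinuous (fun t : Set.Ici (1:ℝ) => ψ t) ∧
      (∀ t ∈ Set.Ici (1:ℝ), ∀ a, q (ψ t a) = φ.toFun t a) ∧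
      (∀ a, ∃ M : ℝ, ∀ t ∈ Set.Ici (1:ℝ), ‖ψ t a‖ ≤ M)) :
    ∃ φbar : ℝ → A → D,
      (∀ t ∈ Set.Ici (1:ℝ), ∀ a, q (φbar t a) = φ.toFun t a) ∧
      Equicontinuous (fun t : Set.Ici (1:ℝ) => φbar t) ∧
      (∀ a, UniformContinuousOn (fun t => φbar t a) (Set.Ici 1)) ∧
      (∀ a, ∃ M : ℝ, ∀ t ∈ Set.Ici (1:ℝ), ‖φbar t a‖ ≤ M) := by
  obtain ⟨ψ, -, hψq, hψbd⟩ := hlift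
  let qR : D →L[ℝ] C := ((q : D →ₗ[ℂ] C).restrictScalars ℝ).mkContinuous 1 fun d ↦ by
    simpa using NonUnitalStarAlgHom.norm_apply_le q d
  obtain ⟨K, hK, hqK⟩ := qR.exists_preimage_norm_le hq
  have hφ_bdd (a : A) : ∃ M, ∀ t, ‖φ.toFun (Set.projIci (1 : ℝ) t) a‖ ≤ M := by
    obtain ⟨M, hM⟩ := hψbd a
    refine ⟨M, fun t ↦ ?_⟩
    rw [← hψq _ (Set.projIci (1 : ℝ) t).2]
    exact (NonUnitalStarAlgHom.norm_apply_le q _).trans (hM _ (Set.projIci (1 : ℝ) t).2)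
  obtain ⟨Φ, hΦ⟩ :=
    BoundedContinuousFunction.exists_continuousMap_uniformlyContinuousSubmodule (𝕜 := ℝ)
      (F := fun a t ↦ φ.toFun (Set.projIci (1 : ℝ) t) a) (fun a ↦ (hunif a).comp_projIci)
      hφ_bdd (hequi.comp (Set.projIci (1 : ℝ)))
  obtain ⟨Ψ, hΨ⟩ := qR.compLeftUniformlyContinuous.exists_continuous_lift_of_approx hK.le
    (fun y _ ↦ qR.exists_approx_preimage_compLeftUniformlyContinuous hK.le hqK y) Φ
  refine ⟨fun t a ↦ (Ψ a).1 t, fun t ht a ↦ ?_,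
    (BoundedContinuousFunction.continuous_iff_equicontinuous.1
      (continuous_subtype_val.comp Ψ.continuous)).comp Subtype.val,
    fun a ↦ (Ψ a).2.uniformContinuousOn,
    fun a ↦ ⟨‖(Ψ a).1‖, fun t _ ↦ (Ψ a).1.norm_coe_le_norm t⟩⟩
  have := DFunLike.congr_fun (congrArg Subtype.val (hΨ a)) t
  rwa [ContinuousLinearMap.compLeftUniformlyContinuous_apply, hΦ, Set.projIci_of_mem ht] at this

/-- Lemma on uniformly continuous lifts: given a surjective morphism `q : D → C` of
C*-algebras whose kernel (the ideal `D₀`) is σ-unital, a separable `A`, and a uniformly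
continuous equi-continuous asymptotic homomorphism `φ : A → C = D/D₀` which admits an
equi-continuous bounded set-theoretic lift (Lemma 2.1 of Manuilov–Thomsen, taken as a
hypothesis), there is a lift `φ̄ : A → D` of `φ` which is equi-continuous, uniformly
continuous in `t`, and pointwise bounded. -/
theorem exists_uniformly_continuous_lift
    (A D C : Type*) [NonUnitalCStarAlgebra A] [NonUnitalCStarAlgebra C]
    [NonUnitalCStarAlgebra D] [TopologicalSpace.SeparableSpace A]
    (q : D →⋆ₙₐ[ℂ] C) (hq : Function.Surjective q)
    -- the kernel ideal `D₀ = ker q` is σ-unital: it has a countable approximate unit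
    (hσ : ∃ e : ℕ → D, (∀ n, q (e n) = 0) ∧
      ∀ d : D, q d = 0 → Tendsto (fun n => ‖e n * d - d‖) atTop (𝓝 0))
    (φ : AsymptoticHom A C)
    (hequi : Equicontinuous fun t : Set.Ici (1:ℝ) => φ.toFun t)
    (hunif : ∀ a : A, UniformContinuousOn (fun t => φ.toFun t a) (Set.Ici 1))
    -- black box (Lemma 2.1 of Manuilov–Thomsen): an equi-continuous bounded lift exists
    (hlift : ∃ ψ : ℝ → A → D,
      Equicontinuous (fun t : Set.Ici (1:ℝ) => ψ t) ∧
      (∀ t ∈ Set.Ici (1:ℝ), ∀ a, q (ψ t a) = φ.toFun t a) ∧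
      (∀ a, ∃ M : ℝ, ∀ t ∈ Set.Ici (1:ℝ), ‖ψ t a‖ ≤ M)) :
    ∃ φbar : ℝ → A → D,
      (∀ t ∈ Set.Ici (1:ℝ), ∀ a, q (φbar t a) = φ.toFun t a) ∧
      Equicontinuous (fun t : Set.Ici (1:ℝ) => φbar t) ∧
      (∀ a, UniformContinuousOn (fun t => φbar t a) (Set.Ici 1)) ∧
      (∀ a, ∃ M : ℝ, ∀ t ∈ Set.Ici (1:ℝ), ‖φbar t a‖ ≤ M) :=
  exists_uniformly_continuous_lift_general A D C q hq φ hequi hunif hlift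
end

section
/- Let {t'_n} and {t_n} be two discretizations of [1,∞) (increasing sequences with t_n → ∞, t_{n+1} − t_n → 0, t_n ≤ n) and let a_1 < a_2 < ⋯ be a strictly increasing sequence of natural numbers. Then there exists a sequence h_0 ≤ h_1 ≤ h_2 ≤ ⋯ of continuous functions h_j : [1,∞) → [1,∞) such that: (i) h_j(t) = t'_j for all j ≤ a_k and t ∈ [k,k+1]; (ii) h_{j+1}(t) − h_j(t) ≤ max{1/k, t'_{j+1} − t'_j} for all j and t ∈ [k,k+1]; (iii) for every n ∈ ℕ there is N_n ∈ ℕ such that h_j(t) = t_j whenever t ∈ [1,n] and j ≥ N_n; (iv) h_j(t) ≤ j for all j ≥ 1 and all t. -/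
open Filter Topology

/-- A discretization of `[1,∞)`: an increasing sequence `t_n → ∞` with
`t_{n+1} − t_n → 0` and `t_n ≤ n` for `n ≥ 1`. -/
structure IsDiscretization (t : ℕ → ℝ) : Prop where
  one_le : ∀ n, 1 ≤ t n
  mono : Monotone t
  strict : ∀ n, 1 ≤ n → t n < t (n + 1)
  tendsto_top : Tendsto t atTop atTop
  gap : Tendsto (fun n => t (n + 1) - t n) atTop (𝓝 0)
  le_n : ∀ n : ℕ, 1 ≤ n → t n ≤ n



/-- Piecewise linear interpolation of a sequence, written as a locally finite sum. -/
noncomputable def plInterp (u : ℕ → ℝ) (x : ℝ) : ℝ :=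
  u 0 + ∑ i ∈ Finset.range (⌊x⌋₊ + 1), (u (i + 1) - u i) * (min (max (x - i) 0) 1)

lemma plInterp_eq_sum (u : ℕ → ℝ) {x : ℝ} {M : ℕ} (hM : ⌊x⌋₊ + 1 ≤ M) :
    plInterp u x = u 0 + ∑ i ∈ Finset.range M, (u (i + 1) - u i) * (min (max (x - i) 0) 1) := by
  unfold plInterp
  congr 1
  apply Finset.sum_subset (Finset.range_subset_range.2 hM)
  intro i _ hi
  rw [Finset.mem_range, not_lt] at hi
  have h1 : x < (i : ℝ) := by
    have h2 := Nat.lt_floor_add_one x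
    have h3 : ((⌊x⌋₊ + 1 : ℕ) : ℝ) ≤ (i : ℝ) := by exact_mod_cast hi
    push_cast at h3
    linarith
  have : max (x - i) 0 = 0 := max_eq_right (by linarith)
  rw [this]
  simp

lemma plInterp_continuous (u : ℕ → ℝ) : Continuous (plInterp u) := by
  rw [continuous_iff_continuousAt]
  intro x₀
  set M := ⌊x₀ + 1⌋₊ + 1 with hMdef
  have hG : Continuous (fun x : ℝ =>
      u 0 + ∑ i ∈ Finset.range M, (u (i + 1) - u i) * (min (max (x - i) 0) 1)) := by
    apply continuous_const.add
    apply continuous_finset_sum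
    intro i _
    exact continuous_const.mul
      (((continuous_id.sub continuous_const).max continuous_const).min continuous_const)
  apply hG.continuousAt.congr
  filter_upwards [Iio_mem_nhds (lt_add_one x₀)] with x (hx : x < x₀ + 1)
  exact (plInterp_eq_sum u (by
    have : ⌊x⌋₊ ≤ ⌊x₀ + 1⌋₊ := Nat.floor_le_floor hx.le
    omega)).symm

lemma plInterp_eq_affine (u : ℕ → ℝ) {x : ℝ} (hx : 0 ≤ x) :
    plInterp u x = u ⌊x⌋₊ + (x - ⌊x⌋₊) * (u (⌊x⌋₊ + 1) - u ⌊x⌋₊) := by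
  unfold plInterp
  rw [Finset.sum_range_succ]
  have h1 : ∑ i ∈ Finset.range ⌊x⌋₊, (u (i + 1) - u i) * (min (max (x - i) 0) 1)
      = ∑ i ∈ Finset.range ⌊x⌋₊, (u (i + 1) - u i) := by
    apply Finset.sum_congr rfl
    intro i hi
    rw [Finset.mem_range] at hi
    have h2 : (1 : ℝ) ≤ x - i := by
      have h3 : ((i : ℝ) + 1) ≤ (⌊x⌋₊ : ℝ) := by exact_mod_cast Nat.succ_le_of_lt hi
      have h4 : (⌊x⌋₊ : ℝ) ≤ x := Nat.floor_le hx
      linarith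
    rw [max_eq_left (by linarith), min_eq_right h2, mul_one]
  rw [h1, Finset.sum_range_sub]
  have h0 : 0 ≤ x - ⌊x⌋₊ := sub_nonneg.2 (Nat.floor_le hx)
  have h3 : x - ⌊x⌋₊ ≤ 1 := by
    have := Nat.lt_floor_add_one x
    push_cast at this
    linarith
  rw [max_eq_left h0, min_eq_left h3]
  ring

lemma plInterp_ge (u : ℕ → ℝ) (hu : Monotone u) {x : ℝ} (hx : 0 ≤ x) :
    u ⌊x⌋₊ ≤ plInterp u x := by
  rw [plInterp_eq_affine u hx]
  have h1 := hu (Nat.le_succ ⌊x⌋₊)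
  have h2 := sub_nonneg.2 (Nat.floor_le hx)
  nlinarith

lemma plInterp_le (u : ℕ → ℝ) (hu : Monotone u) {x : ℝ} (hx : 0 ≤ x) :
    plInterp u x ≤ u (⌊x⌋₊ + 1) := by
  rw [plInterp_eq_affine u hx]
  have h1 := hu (Nat.le_succ ⌊x⌋₊)
  have h2 := sub_nonneg.2 (Nat.floor_le hx)
  have h3 : x - ⌊x⌋₊ ≤ 1 := by
    have := Nat.lt_floor_add_one x
    push_cast at this
    linarith
  nlinarith

/-- Given two discretizations `{t'_n}`, `{t_n}` and a strictly increasing sequence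
`a_1 < a_2 < ⋯` of natural numbers, there is a pointwise increasing sequence of continuous
functions `h_j : [1,∞) → [1,∞)` which agree with `t'_j` on `[k,k+1]` for `j ≤ a_k`,
whose successive differences on `[k,k+1]` are at most `max{1/k, t'_{j+1}−t'_j}`, which
eventually (in `j`) equal `t_j` on every `[1,n]`, and satisfy `h_j(t) ≤ j` for `j ≥ 1`. -/
theorem exists_interpolating_functions
    (t' t : ℕ → ℝ) (ht' : IsDiscretization t') (ht : IsDiscretization t)
    (a : ℕ → ℕ) (ha : StrictMono a) (ha1 : 1 ≤ a 1) :
    ∃ h : ℕ → ℝ → ℝ,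
      (∀ j, ContinuousOn (h j) (Set.Ici 1)) ∧
      (∀ j, ∀ x ∈ Set.Ici (1:ℝ), 1 ≤ h j x) ∧
      (∀ j, ∀ x ∈ Set.Ici (1:ℝ), h j x ≤ h (j + 1) x) ∧
      (∀ k : ℕ, 1 ≤ k → ∀ j ≤ a k, ∀ x ∈ Set.Icc (k:ℝ) (k+1), h j x = t' j) ∧
      (∀ k : ℕ, 1 ≤ k → ∀ j, ∀ x ∈ Set.Icc (k:ℝ) (k+1),
        h (j + 1) x - h j x ≤ max (1 / (k:ℝ)) (t' (j + 1) - t' j)) ∧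
      (∀ n : ℕ, ∃ N : ℕ, ∀ j ≥ N, ∀ x ∈ Set.Icc (1:ℝ) (n:ℝ), h j x = t j) ∧
      (∀ j : ℕ, 1 ≤ j → ∀ x ∈ Set.Ici (1:ℝ), h j x ≤ j) := by
  -- choose gap control
  obtain ⟨φ, hφ⟩ : ∃ φ : ℕ → ℕ, ∀ m : ℕ, ∀ i ≥ φ m, t (i + 1) - t i < 1 / ((m : ℝ) + 1) := by
    have hev : ∀ m : ℕ, ∀ᶠ i in atTop, t (i + 1) - t i < 1 / ((m : ℝ) + 1) := by
      intro m
      exact ht.gap.eventually_lt_const (by positivity)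
    choose φ hφ using fun m => eventually_atTop.mp (hev m)
    exact ⟨φ, hφ⟩
  set b : ℕ → ℕ := fun k => max (a k) ((Finset.range (k + 1)).sup φ) with hbdef
  set w : ℕ → ℝ := fun k => t' (a (k + 1)) with hwdef
  have hbmono : Monotone b := by
    intro k l hkl
    exact max_le_max (ha.monotone hkl)
      (Finset.sup_mono (Finset.range_subset_range.2 (by omega)))
  have hbM : Monotone (fun k => (b k : ℝ)) := fun _ _ hkl => Nat.cast_le.2 (hbmono hkl)
  have hwmono : Monotone w := fun _ _ hkl => ht'.mono (ha.monotone (by omega))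
  set B : ℝ → ℝ := plInterp (fun k => (b k : ℝ)) with hBdef
  set c : ℝ → ℝ := plInterp w with hcdef
  set S : ℕ → ℝ → ℝ := fun j x => 1 + max 0 ((j : ℝ) - B x) / x with hSdef
  have hSsucc : ∀ j : ℕ, ∀ x : ℝ, 0 < x → S (j + 1) x ≤ S j x + 1 / x := by
    intro j x hxpos
    have hmm : max 0 (((j + 1 : ℕ) : ℝ) - B x) ≤ max 0 ((j:ℝ) - B x) + 1 := by
      apply max_le
      · have := le_max_left (0:ℝ) ((j:ℝ) - B x); linarith
      · have := le_max_right (0:ℝ) ((j:ℝ) - B x); push_cast; linarith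
    have h2 := div_le_div_of_nonneg_right hmm hxpos.le
    rw [add_div] at h2
    simp only [hSdef]
    have h3 : (1:ℝ) / x = 1 / x := rfl
    calc 1 + max 0 (((j+1:ℕ)) - B x) / x ≤ 1 + (max 0 ((j:ℝ) - B x) / x + 1/x) := by
          push_cast at h2 ⊢; linarith
      _ = 1 + max 0 ((j:ℝ) - B x) / x + 1/x := by ring
  refine ⟨fun j x => max (min (t' j) (c x)) (min (t j) (S j x)), ?_, ?_, ?_, ?_, ?_, ?_, ?_⟩
  · -- continuity
    intro j
    show ContinuousOn (fun x : ℝ => max (min (t' j) (c x)) (min (t j) (S j x))) (Set.Ici 1)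
    have h1 : ContinuousOn (fun x : ℝ => min (t' j) (c x)) (Set.Ici 1) :=
      (continuous_const.min (plInterp_continuous w)).continuousOn
    have h2 : ContinuousOn (fun x : ℝ => max 0 ((j:ℝ) - B x)) (Set.Ici 1) :=
      (continuous_const.max (continuous_const.sub (plInterp_continuous _))).continuousOn
    have h3 : ContinuousOn (fun x : ℝ => S j x) (Set.Ici 1) := by
      simp only [hSdef]
      refine continuousOn_const.add (h2.div continuousOn_id ?_)
      intro x hx
      have hx1 : (1:ℝ) ≤ x := hx
      positivity
    have h4 : ContinuousOn (fun x : ℝ => min (t j) (S j x)) (Set.Ici 1) :=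
      continuousOn_const.inf' h3
    exact h1.sup' h4
  · -- ≥ 1
    intro j x hx
    have hx0 : (0:ℝ) ≤ x := le_trans zero_le_one hx
    have h1 : (1:ℝ) ≤ c x := le_trans (ht'.one_le _) (plInterp_ge w hwmono hx0)
    exact le_trans (le_min (ht'.one_le j) h1) (le_max_left _ _)
  · -- monotone in j
    intro j x hx
    have hxpos : (0:ℝ) < x := lt_of_lt_of_le zero_lt_one hx
    show max (min (t' j) (c x)) (min (t j) (S j x))
        ≤ max (min (t' (j+1)) (c x)) (min (t (j+1)) (S (j+1) x))
    apply max_le_max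
    · exact min_le_min (ht'.mono (Nat.le_succ j)) le_rfl
    · apply min_le_min (ht.mono (Nat.le_succ j))
      simp only [hSdef]
      have hmm : max 0 ((j:ℝ) - B x) ≤ max 0 (((j+1:ℕ):ℝ) - B x) := by
        apply max_le_max le_rfl
        push_cast
        linarith
      have := div_le_div_of_nonneg_right hmm hxpos.le
      push_cast at this ⊢
      linarith
  · -- equals t' j on [k,k+1] for j ≤ a k
    intro k hk j hj x hx
    have hx0 : (0:ℝ) ≤ x := le_trans (by positivity) hx.1
    have hfl : k ≤ ⌊x⌋₊ := Nat.le_floor hx.1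
    have hBx : (j : ℝ) ≤ B x := by
      refine le_trans ?_ (plInterp_ge _ hbM hx0)
      have : j ≤ b ⌊x⌋₊ := le_trans (le_trans hj (ha.monotone hfl)) (le_max_left _ _)
      exact_mod_cast this
    have hS1 : S j x = 1 := by
      simp only [hSdef]
      rw [max_eq_left (by linarith), zero_div, add_zero]
    have hcx : t' j ≤ c x := by
      refine le_trans ?_ (plInterp_ge w hwmono hx0)
      exact ht'.mono (le_trans hj (ha.monotone (by omega)))
    show max (min (t' j) (c x)) (min (t j) (S j x)) = t' j
    rw [hS1, min_eq_left hcx, min_eq_right (ht.one_le j), max_eq_left (ht'.one_le j)]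
  · -- increment bound
    intro k hk j x hx
    have hkpos : (0:ℝ) < k := by exact_mod_cast hk
    have hxpos : (0:ℝ) < x := lt_of_lt_of_le hkpos hx.1
    have hx0 : (0:ℝ) ≤ x := hxpos.le
    have h1x : 1 / x ≤ 1 / (k:ℝ) := one_div_le_one_div_of_le hkpos hx.1
    have hd' : 0 ≤ t' (j + 1) - t' j := sub_nonneg.2 (ht'.mono (Nat.le_succ j))
    show max (min (t' (j+1)) (c x)) (min (t (j+1)) (S (j+1) x))
        - max (min (t' j) (c x)) (min (t j) (S j x))
        ≤ max (1 / (k:ℝ)) (t' (j + 1) - t' j)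
    set l1 := min (t' j) (c x) with hl1
    set l2 := min (t' (j + 1)) (c x) with hl2
    set p1 := min (t j) (S j x) with hp1
    set p2 := min (t (j + 1)) (S (j + 1) x) with hp2
    have key1 : l2 ≤ l1 + (t' (j + 1) - t' j) := by
      rcases le_total (t' j) (c x) with hh | hh
      · rw [hl1, min_eq_left hh]
        exact le_trans (min_le_left _ _) (by linarith)
      · rw [hl1, min_eq_right hh]
        exact le_trans (min_le_right _ _) (by linarith)
    have key2 : p2 ≤ p1 + 1 / x := by
      rcases lt_or_ge (t j) (S j x) with hh | hh
      · -- p1 = t j; the cap is open, so the gap of t is small here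
        have hc0 : 0 < (j : ℝ) - B x := by
          rcases le_or_gt ((j:ℝ) - B x) 0 with hc | hc
          · exfalso
            have hS1 : S j x = 1 := by
              simp only [hSdef]
              rw [max_eq_left hc, zero_div, add_zero]
            rw [hS1] at hh
            linarith [ht.one_le j]
          · exact hc
        have hb1 : (φ ⌊x⌋₊ : ℝ) ≤ B x := by
          refine le_trans ?_ (plInterp_ge _ hbM hx0)
          have : φ ⌊x⌋₊ ≤ b ⌊x⌋₊ :=
            le_trans (Finset.le_sup (Finset.self_mem_range_succ ⌊x⌋₊)) (le_max_right _ _)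
          exact_mod_cast this
        have hjφ : φ ⌊x⌋₊ ≤ j := by
          have h5 : (φ ⌊x⌋₊ : ℝ) < (j : ℝ) := by linarith
          exact_mod_cast h5.le
        have hgapj := hφ ⌊x⌋₊ j hjφ
        have hfx : 1 / ((⌊x⌋₊ : ℝ) + 1) ≤ 1 / x := by
          apply one_div_le_one_div_of_le hxpos
          exact (Nat.lt_floor_add_one x).le
        rw [hp1, min_eq_left hh.le]
        exact le_trans (min_le_left _ _) (by linarith)
      · -- p1 = S j x
        rw [hp1, min_eq_right hh]
        exact le_trans (min_le_right _ _) (hSsucc j x hxpos)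
    have e1 : l2 ≤ max l1 p1 + max (1 / (k:ℝ)) (t' (j + 1) - t' j) :=
      le_trans key1 (add_le_add (le_max_left _ _) (le_max_right _ _))
    have e2 : p2 ≤ max l1 p1 + max (1 / (k:ℝ)) (t' (j + 1) - t' j) :=
      le_trans key2 (add_le_add (le_max_right _ _) (le_trans h1x (le_max_left _ _)))
    have := max_le e1 e2
    linarith
  · -- eventually equals t j on [1, n]
    intro n
    set m : ℕ := max n 1 with hmdef
    have hm1 : 1 ≤ m := le_max_right n 1
    have hmpos : (0:ℝ) < m := by exact_mod_cast hm1
    set G : ℕ := φ (2 * m) with hGdef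
    set β : ℕ := b (m + 1) with hβdef
    have hvpos : (0:ℝ) < 2 * (m:ℝ) + 1 := by linarith
    set v : ℝ := 1 / (2 * (m:ℝ) + 1) with hvdef
    set ε : ℝ := 1 / (m:ℝ) - v with hεdef
    have hε : 0 < ε := by
      have h1 : (1:ℝ)/(2 * (m:ℝ) + 1) < 1/(m:ℝ) :=
        one_div_lt_one_div_of_lt hmpos (by linarith)
      simp only [hεdef, hvdef]
      linarith
    set C : ℝ := t G - (G:ℝ) * v - 1 + (β:ℝ) * (1/(m:ℝ)) with hCdef
    have e1 : ∀ᶠ j : ℕ in atTop, w (m + 1) ≤ t j := ht.tendsto_top.eventually_ge_atTop _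
    have e2 : ∀ᶠ j : ℕ in atTop, β ≤ j := eventually_ge_atTop β
    have e3 : ∀ᶠ j : ℕ in atTop, G ≤ j := eventually_ge_atTop G
    have e4 : ∀ᶠ j : ℕ in atTop, C ≤ ε * j := by
      have := (tendsto_natCast_atTop_atTop (R := ℝ)).const_mul_atTop hε
      exact this.eventually_ge_atTop C
    obtain ⟨N, hN⟩ := eventually_atTop.mp (((e1.and e2).and e3).and e4)
    refine ⟨N, ?_⟩
    intro j hj x hx
    obtain ⟨⟨⟨h1, h2⟩, h3⟩, h4⟩ := hN j hj
    have hx1 : (1:ℝ) ≤ x := hx.1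
    have hx0 : (0:ℝ) ≤ x := by linarith
    have hxpos : (0:ℝ) < x := by linarith
    have hxm : x ≤ (m:ℝ) := le_trans hx.2 (by exact_mod_cast le_max_left n 1)
    have hflm : ⌊x⌋₊ ≤ m := by
      have := Nat.floor_le_floor hxm
      rwa [Nat.floor_natCast] at this
    -- gap induction bound
    have hvind : ∀ i : ℕ, t (G + i) ≤ t G + i * v := by
      intro i
      induction i with
      | zero => simp
      | succ i ih =>
        have hst := hφ (2 * m) (G + i) (Nat.le_add_right _ _)
        have hst' : t (G + i + 1) - t (G + i) < v := by
          refine lt_of_lt_of_le hst (le_of_eq ?_)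
          rw [hvdef]
          push_cast
          ring_nf
        have hre : G + (i + 1) = (G + i) + 1 := by omega
        rw [hre]
        push_cast
        push_cast at ih
        linarith
    have htj : t j ≤ t G + ((j:ℝ) - G) * v := by
      obtain ⟨i, rfl⟩ := Nat.exists_eq_add_of_le h3
      have h5 := hvind i
      push_cast
      push_cast at h5
      linarith
    -- S bound
    have hBx : B x ≤ (β:ℝ) := by
      refine le_trans (plInterp_le _ hbM hx0) ?_
      exact Nat.cast_le.2 (hbmono (by omega))
    have hjβ : (β:ℝ) ≤ (j:ℝ) := Nat.cast_le.2 h2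
    have hSt : t j ≤ S j x := by
      have hnum : (j:ℝ) - β ≤ max 0 ((j:ℝ) - B x) :=
        le_trans (by linarith) (le_max_right _ _)
      have hdiv1 : ((j:ℝ) - β) / (m:ℝ) ≤ ((j:ℝ) - β) / x :=
        div_le_div_of_nonneg_left (by linarith) hxpos hxm
      have hdiv2 : ((j:ℝ) - β) / x ≤ max 0 ((j:ℝ) - B x) / x :=
        div_le_div_of_nonneg_right hnum hx0
      have hexp1 : ((j:ℝ) - β) / (m:ℝ) = (j:ℝ) * (1/(m:ℝ)) - (β:ℝ) * (1/(m:ℝ)) := by ring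
      have hexp2 : ε * (j:ℝ) = (j:ℝ) * (1/(m:ℝ)) - (j:ℝ) * v := by
        simp only [hεdef]; ring
      have hexp3 : ((j:ℝ) - (G:ℝ)) * v = (j:ℝ) * v - (G:ℝ) * v := by ring
      simp only [hSdef]
      rw [hexp2] at h4
      rw [hexp3] at htj
      simp only [hCdef] at h4
      nlinarith [hdiv1, hdiv2, hexp1]
    have hlc : min (t' j) (c x) ≤ t j := by
      refine le_trans (min_le_right _ _) ?_
      refine le_trans (plInterp_le w hwmono hx0) ?_
      exact le_trans (hwmono (by omega)) h1
    show max (min (t' j) (c x)) (min (t j) (S j x)) = t j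
    rw [min_eq_left hSt, max_eq_right hlc]
  · -- h j ≤ j
    intro j hj x hx
    show max (min (t' j) (c x)) (min (t j) (S j x)) ≤ (j:ℝ)
    apply max_le
    · exact le_trans (min_le_left _ _) (ht'.le_n j hj)
    · exact le_trans (min_le_left _ _) (ht.le_n j hj)
end

section
/- Let B be a σ-unital C*-algebra, A a separable C*-algebra, and φ = (φ_t) : A → M(B) an equi-continuous family with sup_t ‖φ_t(a)‖ < ∞ for all a. Let {u_n} be a unit sequence in B, set Δ_0 = √u_0, Δ_n = √(u_n − u_{n-1}), and let {t_n} be a discretization. Then for every a ∈ A the series Σ_{j=0}^∞ Δ_j φ_{t_j}(a) Δ_j converges in the strict topology of M(B), and ‖Σ_{j=0}^∞ Δ_j φ_{t_j}(a) Δ_j‖ ≤ 3 sup_j ‖φ_{t_j}(a)‖. -/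
/-!
Write `D_j` for `Δ_j` seen in `𝓜(ℂ, B)` and `m_j = φ_{t_j}(a)`, `‖m_j‖ ≤ M`. Since
`Δ_i Δ_j = 0` for `|i - j| ≥ 2`, the even-indexed and the odd-indexed terms of the folding sum
each form a family of mutually orthogonal summands, and for such a family
`X = ∑ D_j m_j D_j` one has `X⋆X ≤ M² ∑ D_j²`, hence `‖X c‖² ≤ M² ‖c⋆ (∑ D_j²) c‖`.
As `∑_{j ≤ n} Δ_j² = u_n`, the partial sums have norm at most `2M`, and a block of the series
between `K` and `N` satisfies `‖X c‖ ≤ 2M (‖c‖ ‖(u_N - u_K) c‖)^{1/2}`; since `u_n c → c`, the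
partial sums are strictly Cauchy. Strictly Cauchy sequences of multipliers converge strictly
(Banach–Steinhaus makes the pointwise limits of the left and right actions bounded), and the
limit inherits the bound `2M ≤ 3M`.
-/

open Filter Topology MultiplierAlgebra

lemma cauchySeq_of_dist_le_of_cauchySeq {α β : Type*} [PseudoMetricSpace α] [PseudoMetricSpace β]
    {g : ℕ → α} {h : ℕ → β} {f : ℝ → ℝ} (hf : Tendsto f (𝓝 0) (𝓝 0)) (hh : CauchySeq h)
    (hgh : ∀ m n, m ≤ n → dist (g m) (g n) ≤ f (dist (h m) (h n))) : CauchySeq g := by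
  rw [cauchySeq_iff_tendsto_dist_atTop_0] at hh ⊢
  refine squeeze_zero (fun _ => dist_nonneg) (fun p => ?_) (hf.comp hh)
  rcases le_total p.1 p.2 with hp | hp
  · exact hgh _ _ hp
  · simpa only [Function.comp_apply, dist_comm] using hgh _ _ hp

lemma tendsto_mul_of_dense_range_mul {R : Type*} [NonUnitalSeminormedRing R] {u : ℕ → R} {b : R}
    {K : NNReal} (hu : ∀ n, ‖u n‖ ≤ K) (hb : Tendsto (u · * b) atTop (𝓝 b))
    (hdense : Dense (Set.range (b * ·))) (x : R) : Tendsto (u · * x) atTop (𝓝 x) := by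
  have hequi : Equicontinuous fun n (y : R) => u n * y :=
    (LipschitzWith.uniformEquicontinuous _ K fun n => LipschitzWith.of_dist_le_mul fun y z => by
      rw [dist_eq_norm, dist_eq_norm, ← mul_sub]
      exact (norm_mul_le _ _).trans (by gcongr; exact hu n)).equicontinuous
  have hclosed := hequi.isClosed_setOfPred_tendsto (l := atTop) continuous_id
  suffices Set.range (b * ·) ⊆ {y | Tendsto (u · * y) atTop (𝓝 y)} from
    hclosed.closure_subset_iff.2 this (hdense x)
  rintro _ ⟨y, rfl⟩
  simpa only [Set.mem_ofPred_eq, mul_assoc] using hb.mul_const y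

lemma IsSelfAdjoint.mul_eq_zero_comm {R : Type*} [NonUnitalSemiring R] [StarRing R]
    {a b : R} (ha : IsSelfAdjoint a) (hb : IsSelfAdjoint b) : a * b = 0 ↔ b * a = 0 := by
  rw [← star_eq_zero, star_mul, ha.star_eq, hb.star_eq]

structure IsBandedContraction {R : Type*} [NonUnitalNormedRing R] [StarRing R] (d : ℕ → R) :
    Prop where
  isSelfAdjoint : ∀ j, IsSelfAdjoint (d j)
  norm_le_one : ∀ j, ‖d j‖ ≤ 1
  mul_eq_zero : ∀ i j, i + 2 ≤ j → d i * d j = 0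

section CStarAlgebra

variable {C : Type*} [NonUnitalCStarAlgebra C] [PartialOrder C] [StarOrderedRing C]

lemma mul_sqrt_eq_zero {a y : C} (hy : 0 ≤ y) (h : a * y = 0) : a * CFC.sqrt y = 0 := by
  rw [← CStarRing.mul_star_self_eq_zero_iff, star_mul, (CFC.sqrt_nonneg y).isSelfAdjoint.star_eq,
    mul_assoc, ← mul_assoc (CFC.sqrt y), CFC.sqrt_mul_sqrt_self y, ← mul_assoc, h, zero_mul]

lemma sqrt_mul_sqrt_eq_zero {x y : C} (hx : 0 ≤ x) (hy : 0 ≤ y) (h : x * y = 0) :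
    CFC.sqrt x * CFC.sqrt y = 0 := by
  have hsx := (CFC.sqrt_nonneg x).isSelfAdjoint
  have hsy := (CFC.sqrt_nonneg y).isSelfAdjoint
  have h₁ : CFC.sqrt y * x = 0 :=
    (IsSelfAdjoint.mul_eq_zero_comm hx.isSelfAdjoint hsy).1 (mul_sqrt_eq_zero hy h)
  exact (IsSelfAdjoint.mul_eq_zero_comm hsy hsx).1 (mul_sqrt_eq_zero hx h₁)

lemma cfcₙ_nonneg_and_norm_le_one {b : C} (hb : 0 ≤ b) (hb1 : ‖b‖ ≤ 1) {f : ℝ → ℝ}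
    (hf : ∀ x ∈ Set.Icc (0 : ℝ) 1, f x ∈ Set.Icc (0 : ℝ) 1) :
    0 ≤ cfcₙ f b ∧ ‖cfcₙ f b‖ ≤ 1 := by
  have hσ : ∀ x ∈ quasispectrum ℝ b, f x ∈ Set.Icc (0 : ℝ) 1 := fun x hx =>
    hf x ⟨quasispectrum_nonneg_of_nonneg b hb x hx, (Real.le_norm_self x).trans <|
      (NonUnitalIsometricContinuousFunctionalCalculus.norm_quasispectrum_le b hx).trans hb1⟩
  exact ⟨cfcₙ_nonneg fun x hx => (hσ x hx).1, norm_cfcₙ_le fun x hx => by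
    rw [Real.norm_of_nonneg (hσ x hx).1]; exact (hσ x hx).2⟩

variable {κ : Type*} {F : Finset κ} {d m : κ → C} {M : ℝ}

lemma star_sum_conj_mul_sum_conj_le (hd : ∀ j, IsSelfAdjoint (d j)) (hd1 : ∀ j, ‖d j‖ ≤ 1)
    (hm : ∀ j, ‖m j‖ ≤ M) (horth : (F : Set κ).Pairwise fun i j => d i * d j = 0) :
    star (∑ j ∈ F, d j * m j * d j) * ∑ j ∈ F, d j * m j * d j ≤ M ^ 2 • ∑ j ∈ F, d j * d j := by
  have hdiag : star (∑ j ∈ F, d j * m j * d j) * ∑ j ∈ F, d j * m j * d j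
      = ∑ j ∈ F, star (d j) * (star (m j) * (d j * d j) * m j) * d j := by
    rw [star_sum, Finset.sum_mul_sum]
    refine Finset.sum_congr rfl fun i hi => ?_
    rw [Finset.sum_eq_single_of_mem i hi fun j hj hji => ?_]
    · simp only [star_mul, (hd i).star_eq, mul_assoc]
    · have h0 : ∀ x, d i * (d j * x) = 0 := fun x => by
        rw [← mul_assoc, horth hi hj hji.symm, zero_mul]
      simp only [star_mul, (hd i).star_eq, mul_assoc, h0, mul_zero]
  rw [hdiag, Finset.smul_sum]
  refine Finset.sum_le_sum fun j _ => ?_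
  have hdd : 0 ≤ d j * d j := by simpa only [(hd j).star_eq] using star_mul_self_nonneg (d j)
  have hnorm : ‖star (m j) * (d j * d j) * m j‖ ≤ M ^ 2 := calc
    _ ≤ ‖star (m j)‖ * (‖d j‖ * ‖d j‖) * ‖m j‖ := by grw [norm_mul₃_le, norm_mul_le]
    _ ≤ M * (1 * 1) * M := by
      have hM : 0 ≤ M := (norm_nonneg _).trans (hm j)
      rw [norm_star]
      gcongr <;> simp only [hd1, hm]
    _ = M ^ 2 := by ring
  calc star (d j) * (star (m j) * (d j * d j) * m j) * d j
      ≤ ‖star (m j) * (d j * d j) * m j‖ • (star (d j) * d j) :=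
        CStarAlgebra.star_left_conjugate_le_norm_smul (hdd.isSelfAdjoint.conjugate' _)
    _ ≤ M ^ 2 • (d j * d j) := by
        rw [(hd j).star_eq]; exact smul_le_smul_of_nonneg_right hnorm hdd

lemma norm_mul_le_of_star_mul_self_le {x p : C} (hM : 0 ≤ M) (h : star x * x ≤ M ^ 2 • p)
    (c : C) : ‖x * c‖ ≤ M * √‖star c * p * c‖ := by
  have hsq : ‖x * c‖ ^ 2 ≤ M ^ 2 * ‖star c * p * c‖ := calc
    ‖x * c‖ ^ 2 = ‖star c * (star x * x) * c‖ := by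
      rw [sq, ← CStarRing.norm_star_mul_self, star_mul, mul_assoc, ← mul_assoc (star x),
        ← mul_assoc]
    _ ≤ ‖star c * (M ^ 2 • p) * c‖ :=
      CStarAlgebra.norm_le_norm_of_nonneg_of_le
        (star_left_conjugate_nonneg (star_mul_self_nonneg x) c) (star_left_conjugate_le_conjugate h c)
    _ = M ^ 2 * ‖star c * p * c‖ := by
      rw [mul_smul_comm, smul_mul_assoc, norm_smul, Real.norm_of_nonneg (sq_nonneg M)]
  rw [← Real.sqrt_sq hM, ← Real.sqrt_mul (sq_nonneg M)]
  exact Real.le_sqrt_of_sq_le hsq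

lemma IsBandedContraction.norm_sum_conj_mul_le {d m : ℕ → C} (hd : IsBandedContraction d)
    (hm : ∀ j, ‖m j‖ ≤ M) (F : Finset ℕ) (c : C) :
    ‖(∑ j ∈ F, d j * m j * d j) * c‖ ≤ 2 * M * √‖star c * (∑ j ∈ F, d j * d j) * c‖ := by
  have hM : 0 ≤ M := (norm_nonneg _).trans (hm 0)
  have hdd : ∀ j, 0 ≤ d j * d j := fun j => by
    simpa only [(hd.isSelfAdjoint j).star_eq] using star_mul_self_nonneg (d j)
  have hpart : ∀ G ⊆ F, (∀ i ∈ G, ∀ j ∈ G, i % 2 = j % 2) →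
      ‖(∑ j ∈ G, d j * m j * d j) * c‖ ≤ M * √‖star c * (∑ j ∈ F, d j * d j) * c‖ := by
    intro G hGF hpar
    -- distinct indices of equal parity are at least 2 apart
    have horth : (G : Set ℕ).Pairwise fun i j => d i * d j = 0 := by
      intro i hi j hj hij
      have := hpar i hi j hj
      rcases hij.lt_or_gt with h | h
      · exact hd.mul_eq_zero i j (by omega)
      · exact (IsSelfAdjoint.mul_eq_zero_comm (hd.isSelfAdjoint j) (hd.isSelfAdjoint i)).1
          (hd.mul_eq_zero j i (by omega))
    refine (norm_mul_le_of_star_mul_self_le hM (star_sum_conj_mul_sum_conj_le hd.isSelfAdjoint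
      hd.norm_le_one hm horth) c).trans ?_
    gcongr
    exact CStarAlgebra.norm_le_norm_of_nonneg_of_le
      (star_left_conjugate_nonneg (Finset.sum_nonneg fun j _ => hdd j) c)
      (star_left_conjugate_le_conjugate
        (Finset.sum_le_sum_of_subset_of_nonneg hGF fun j _ _ => hdd j) c)
  rw [← Finset.sum_filter_add_sum_filter_not F (fun j => j % 2 = 0), add_mul]
  refine (norm_add_le _ _).trans ?_
  have heven := hpart (F.filter (· % 2 = 0)) (Finset.filter_subset _ F) fun i hi j hj => by
    simp only [Finset.mem_filter] at hi hj; omega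
  have hodd := hpart (F.filter (¬ · % 2 = 0)) (Finset.filter_subset _ F) fun i hi j hj => by
    simp only [Finset.mem_filter] at hi hj; omega
  linarith

end CStarAlgebra

section UnitSequence

variable {R : Type*}

def increment [Sub R] (u : ℕ → R) : ℕ → R
  | 0 => u 0
  | n + 1 => u (n + 1) - u n

lemma sum_range_succ_increment [AddCommGroup R] (u : ℕ → R) (n : ℕ) :
    ∑ j ∈ Finset.range (n + 1), increment u j = u n := by
  induction n with
  | zero => simp [increment]
  | succ n ih => rw [Finset.sum_range_succ, ih, increment, add_sub_cancel]

lemma norm_sum_range_increment_le_one [SeminormedAddCommGroup R] {u : ℕ → R}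
    (hu : ∀ n, ‖u n‖ ≤ 1) : ∀ n, ‖∑ j ∈ Finset.range n, increment u j‖ ≤ 1
  | 0 => by simp
  | n + 1 => by rw [sum_range_succ_increment]; exact hu n

lemma tendsto_sum_range_increment_mul [NonUnitalRing R] [TopologicalSpace R] {u : ℕ → R} {x : R}
    (h : Tendsto (u · * x) atTop (𝓝 x)) :
    Tendsto (fun n => (∑ j ∈ Finset.range n, increment u j) * x) atTop (𝓝 x) :=
  (tendsto_add_atTop_iff_nat 1).1 (by simpa only [sum_range_succ_increment] using h)

lemma increment_nonneg [AddCommGroup R] [PartialOrder R] [IsOrderedAddMonoid R] {u : ℕ → R}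
    (h0 : 0 ≤ u 0) (hu : Monotone u) : ∀ n, 0 ≤ increment u n
  | 0 => h0
  | n + 1 => sub_nonneg.2 (hu n.le_succ)

lemma increment_le [AddCommGroup R] [PartialOrder R] [IsOrderedAddMonoid R] {u : ℕ → R}
    (h0 : ∀ n, 0 ≤ u n) : ∀ n, increment u n ≤ u n
  | 0 => le_rfl
  | n + 1 => sub_le_self _ (h0 n)

variable [NonUnitalRing R] [StarRing R] {u : ℕ → R}

lemma mul_eq_left_of_lt (hsa : ∀ n, IsSelfAdjoint (u n)) (hunit : ∀ n, u (n + 1) * u n = u n)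
    {i j : ℕ} (hij : i < j) : u i * u j = u i := by
  have h : u j * u i = u i := by
    induction j, hij using Nat.le_induction with
    | base => exact hunit i
    | succ n _ ih => rw [← ih, ← mul_assoc, hunit]
  simpa only [star_mul, (hsa i).star_eq, (hsa j).star_eq] using congr_arg star h

lemma increment_mul_eq_self_of_lt (hsa : ∀ n, IsSelfAdjoint (u n))
    (hunit : ∀ n, u (n + 1) * u n = u n) {i j : ℕ} (hij : i < j) :
    increment u i * u j = increment u i := by
  cases i with
  | zero => exact mul_eq_left_of_lt hsa hunit hij
  | succ i =>
    rw [increment, sub_mul, mul_eq_left_of_lt hsa hunit hij,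
      mul_eq_left_of_lt hsa hunit (by omega : i < j)]

lemma increment_mul_increment_eq_zero (hsa : ∀ n, IsSelfAdjoint (u n))
    (hunit : ∀ n, u (n + 1) * u n = u n) {i j : ℕ} (hij : i + 2 ≤ j) :
    increment u i * increment u j = 0 := by
  obtain ⟨k, rfl⟩ : ∃ k, j = k + 1 := ⟨j - 1, by omega⟩
  rw [increment, mul_sub, increment_mul_eq_self_of_lt hsa hunit (by omega),
    increment_mul_eq_self_of_lt hsa hunit (by omega), sub_self]

lemma isBandedContraction_sqrt_increment {B : Type*} [NonUnitalCStarAlgebra B] [PartialOrder B]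
    [StarOrderedRing B] {u : ℕ → B} (hu0 : ∀ n, 0 ≤ u n) (hu1 : ∀ n, ‖u n‖ ≤ 1)
    (hmono : Monotone u) (hunit : ∀ n, u (n + 1) * u n = u n) :
    IsBandedContraction fun j => CFC.sqrt (increment u j) where
  isSelfAdjoint j := (CFC.sqrt_nonneg _).isSelfAdjoint
  norm_le_one j := by
    have hinc := increment_nonneg (hu0 0) hmono j
    rw [CFC.norm_sqrt _ hinc, Real.sqrt_le_one]
    exact (CStarAlgebra.norm_le_norm_of_nonneg_of_le hinc (increment_le hu0 j)).trans (hu1 j)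
  mul_eq_zero i j h := sqrt_mul_sqrt_eq_zero (increment_nonneg (hu0 0) hmono i)
    (increment_nonneg (hu0 0) hmono j)
    (increment_mul_increment_eq_zero (fun n => (hu0 n).isSelfAdjoint) hunit h)

end UnitSequence

namespace DoubleCentralizer

variable {𝕜 A : Type*} [DenselyNormedField 𝕜] [NonUnitalNormedRing A] [StarRing A] [CStarRing A]
  [NormedSpace 𝕜 A] [SMulCommClass 𝕜 A A] [IsScalarTower 𝕜 A A]

lemma fst_mul_right (m : 𝓜(𝕜, A)) (a b : A) : m.fst (a * b) = m.fst a * b := by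
  have key : ∀ y, y * m.fst (a * b) = y * (m.fst a * b) := fun y => by
    rw [← m.central, ← mul_assoc, m.central, mul_assoc]
  exact sub_eq_zero.1 <| (CStarRing.star_mul_self_eq_zero_iff _).1 <| by rw [mul_sub, key, sub_self]

lemma snd_mul_left (m : 𝓜(𝕜, A)) (a b : A) : m.snd (a * b) = a * m.snd b := by
  have key : ∀ y, m.snd (a * b) * y = a * m.snd b * y := fun y => by
    rw [m.central, mul_assoc, ← m.central, mul_assoc]
  exact sub_eq_zero.1 <| (CStarRing.mul_star_self_eq_zero_iff _).1 <| by rw [sub_mul, key, sub_self]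

variable [StarRing 𝕜] [StarModule 𝕜 A]

local notation "ι" => coeHom (𝕜 := 𝕜) (A := A)

lemma mul_coeHom (m : 𝓜(𝕜, A)) (a : A) : m * ι a = ι (m.fst a) := by
  ext b
  · exact fst_mul_right m a b
  · exact m.central b a

lemma coeHom_mul (m : 𝓜(𝕜, A)) (a : A) : ι a * m = ι (m.snd a) := by
  ext b
  · exact (m.central a b).symm
  · exact snd_mul_left m b a

lemma norm_coeHom (a : A) : ‖ι a‖ = ‖a‖ := by
  rw [← norm_fst]
  exact ContinuousLinearMap.opNorm_mul_apply 𝕜 A a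

lemma isometry_coeHom : Isometry (ι) :=
  AddMonoidHomClass.isometry_of_norm _ norm_coeHom

lemma cauchySeq_coeHom_iff {f : ℕ → A} : CauchySeq (fun n => ι (f n)) ↔ CauchySeq f := by
  rw [CauchySeq, ← Function.comp_def, ← Filter.map_map,
    (isometry_coeHom (𝕜 := 𝕜)).isUniformInducing.cauchy_map_iff]
  rfl

theorem exists_tendsto_strict_of_cauchySeq [CompleteSpace A] {T : ℕ → 𝓜(𝕜, A)}
    (hright : ∀ a : A, CauchySeq fun n => T n * ι a)
    (hleft : ∀ a : A, CauchySeq fun n => ι a * T n) :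
    ∃ S : 𝓜(𝕜, A), ∀ a : A, Tendsto (fun n => T n * ι a) atTop (𝓝 (S * ι a)) ∧
      Tendsto (fun n => ι a * T n) atTop (𝓝 (ι a * S)) := by
  simp only [mul_coeHom, coeHom_mul, cauchySeq_coeHom_iff] at hright hleft ⊢
  choose L hL using fun a => cauchySeq_tendsto_of_complete (hright a)
  choose R hR using fun a => cauchySeq_tendsto_of_complete (hleft a)
  let L' := continuousLinearMapOfTendsto (fun n => (T n).fst) (tendsto_pi_nhds.2 hL)
  let R' := continuousLinearMapOfTendsto (fun n => (T n).snd) (tendsto_pi_nhds.2 hR)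
  have central : ∀ x y, R x * y = x * L y := fun x y =>
    tendsto_nhds_unique ((hR x).mul_const y) <| by
      simpa only [(T _).central] using (hL y).const_mul x
  exact ⟨⟨(L', R'), central⟩, fun a => ⟨(isometry_coeHom.continuous.tendsto _).comp (hL a),
    (isometry_coeHom.continuous.tendsto _).comp (hR a)⟩⟩

theorem norm_le_of_tendsto_mul_coeHom {T : ℕ → 𝓜(𝕜, A)} {S : 𝓜(𝕜, A)} {C : ℝ}
    (hT : ∀ n, ‖T n‖ ≤ C) (hS : ∀ a : A, Tendsto (fun n => T n * ι a) atTop (𝓝 (S * ι a))) :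
    ‖S‖ ≤ C := by
  rw [← norm_fst]
  refine ContinuousLinearMap.opNorm_le_bound _ ((norm_nonneg _).trans (hT 0)) fun a => ?_
  rw [← norm_coeHom (𝕜 := 𝕜), ← mul_coeHom]
  refine le_of_tendsto' (hS a).norm fun n => ?_
  grw [norm_mul_le, hT n, norm_coeHom]

end DoubleCentralizer

section FoldingSum

variable {B : Type*} [NonUnitalCStarAlgebra B]

local notation "ι" => DoubleCentralizer.coeHom (𝕜 := ℂ) (A := B)

noncomputable def foldingSum (Δ : ℕ → B) (m : ℕ → 𝓜(ℂ, B)) (F : Finset ℕ) : 𝓜(ℂ, B) :=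
  ∑ j ∈ F, ι (Δ j) * m j * ι (Δ j)

variable {Δ : ℕ → B} {m : ℕ → 𝓜(ℂ, B)} {M : ℝ}

lemma foldingSum_range_sub_range {K N : ℕ} (h : K ≤ N) :
    foldingSum Δ m (Finset.range N) - foldingSum Δ m (Finset.range K) =
      foldingSum Δ m (Finset.Ico K N) :=
  (Finset.sum_Ico_eq_sub _ h).symm

lemma star_foldingSum (hΔ : ∀ j, IsSelfAdjoint (Δ j)) (F : Finset ℕ) :
    star (foldingSum Δ m F) = foldingSum Δ (star m) F := by
  simp only [foldingSum, star_sum, star_mul, ← map_star, (hΔ _).star_eq, mul_assoc, Pi.star_apply]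

lemma IsBandedContraction.coeHom (hΔ : IsBandedContraction Δ) :
    IsBandedContraction fun j => ι (Δ j) where
  isSelfAdjoint j := (hΔ.isSelfAdjoint j).map ι
  norm_le_one j := (DoubleCentralizer.norm_coeHom _).trans_le (hΔ.norm_le_one j)
  mul_eq_zero i j h := by rw [← map_mul, hΔ.mul_eq_zero i j h, map_zero]

lemma IsBandedContraction.norm_foldingSum_mul_le (hΔ : IsBandedContraction Δ)
    (hm : ∀ j, ‖m j‖ ≤ M) (F : Finset ℕ) (c : 𝓜(ℂ, B)) :
    ‖foldingSum Δ m F * c‖ ≤ 2 * M * √‖star c * ι (∑ j ∈ F, Δ j * Δ j) * c‖ := by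
  -- `𝓜(ℂ, B)` has no order instance; like any C⋆-algebra it carries the spectral order
  let := CStarAlgebra.spectralOrder 𝓜(ℂ, B)
  let := CStarAlgebra.spectralOrderedRing 𝓜(ℂ, B)
  simpa only [foldingSum, map_sum, map_mul] using hΔ.coeHom.norm_sum_conj_mul_le hm F c

lemma IsBandedContraction.norm_foldingSum_mul_coeHom_le (hΔ : IsBandedContraction Δ)
    (hm : ∀ j, ‖m j‖ ≤ M) (F : Finset ℕ) (x : B) :
    ‖foldingSum Δ m F * ι x‖ ≤ 2 * M * √(‖x‖ * ‖(∑ j ∈ F, Δ j * Δ j) * x‖) := by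
  have hM : 0 ≤ M := (norm_nonneg _).trans (hm 0)
  refine (hΔ.norm_foldingSum_mul_le hm F (ι x)).trans ?_
  rw [← map_star, ← map_mul, ← map_mul, DoubleCentralizer.norm_coeHom, ← norm_star x,
    mul_assoc (star x)]
  gcongr
  exact norm_mul_le _ _

lemma IsBandedContraction.norm_coeHom_mul_foldingSum_le (hΔ : IsBandedContraction Δ)
    (hm : ∀ j, ‖m j‖ ≤ M) (F : Finset ℕ) (x : B) :
    ‖ι x * foldingSum Δ m F‖ ≤ 2 * M * √(‖x‖ * ‖(∑ j ∈ F, Δ j * Δ j) * star x‖) := by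
  rw [← norm_star, star_mul, star_foldingSum hΔ.isSelfAdjoint, ← map_star, ← norm_star x]
  exact hΔ.norm_foldingSum_mul_coeHom_le (fun j => (norm_star _).trans_le (hm j)) F _

theorem IsBandedContraction.exists_tendsto_foldingSum (hΔ : IsBandedContraction Δ)
    (hm : ∀ j, ‖m j‖ ≤ M)
    (hunit : ∀ x, Tendsto (fun N => (∑ j ∈ Finset.range N, Δ j * Δ j) * x) atTop (𝓝 x))
    (hunit1 : ∀ N, ‖∑ j ∈ Finset.range N, Δ j * Δ j‖ ≤ 1) :
    ∃ S : 𝓜(ℂ, B), (∀ c : B,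
      Tendsto (fun N => foldingSum Δ m (Finset.range N) * ι c) atTop (𝓝 (S * ι c)) ∧
      Tendsto (fun N => ι c * foldingSum Δ m (Finset.range N)) atTop (𝓝 (ι c * S))) ∧
      ‖S‖ ≤ 2 * M := by
  have hM : 0 ≤ M := (norm_nonneg _).trans (hm 0)
  have hmod : ∀ x : B, Tendsto (fun r => 2 * M * √(‖x‖ * r)) (𝓝 0) (𝓝 0) := fun x => by
    have : Continuous fun r : ℝ => 2 * M * √(‖x‖ * r) := by fun_prop
    simpa using this.tendsto 0
  have hdist : ∀ (y : B) {K N : ℕ}, K ≤ N → ‖(∑ j ∈ Finset.Ico K N, Δ j * Δ j) * y‖ =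
      dist ((∑ j ∈ Finset.range K, Δ j * Δ j) * y) ((∑ j ∈ Finset.range N, Δ j * Δ j) * y) :=
    fun y K N h => by rw [dist_comm, dist_eq_norm, ← sub_mul, Finset.sum_Ico_eq_sub _ h]
  obtain ⟨S, hS⟩ := DoubleCentralizer.exists_tendsto_strict_of_cauchySeq
    (T := fun N => foldingSum Δ m (Finset.range N))
    (fun x => cauchySeq_of_dist_le_of_cauchySeq (hmod x) (hunit x).cauchySeq fun K N h => by
      rw [dist_comm, dist_eq_norm, ← sub_mul, foldingSum_range_sub_range h, ← hdist x h]
      exact hΔ.norm_foldingSum_mul_coeHom_le hm _ x)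
    (fun x => cauchySeq_of_dist_le_of_cauchySeq (hmod x) (hunit (star x)).cauchySeq fun K N h => by
      rw [dist_comm, dist_eq_norm, ← mul_sub, foldingSum_range_sub_range h, ← hdist (star x) h]
      exact hΔ.norm_coeHom_mul_foldingSum_le hm _ x)
  refine ⟨S, hS, DoubleCentralizer.norm_le_of_tendsto_mul_coeHom (fun N => ?_) fun c => (hS c).1⟩
  have h := hΔ.norm_foldingSum_mul_le hm (Finset.range N) 1
  rw [star_one, one_mul, mul_one, mul_one, DoubleCentralizer.norm_coeHom] at h
  exact h.trans (mul_le_of_le_one_right (by positivity) (Real.sqrt_le_one.2 (hunit1 N)))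

end FoldingSum

theorem folding_sum_strictly_convergent_general
    (A B : Type*)
    [NonUnitalCStarAlgebra B] [PartialOrder B] [StarOrderedRing B]
    (b : B) (hb_pos : 0 ≤ b) (hb_norm : ‖b‖ ≤ 1)
    (hb_strict : Dense (Set.range fun x : B => b * x * b))
    (φ : ℝ → A → 𝓜(ℂ, B))
    (hbdd : ∀ a, ∃ M : ℝ, ∀ t ∈ Set.Ici (1:ℝ), ‖φ t a‖ ≤ M)
    -- unit sequence
    (u : ℕ → B) (hmono : Monotone u)
    (hfn : ∀ n, ∃ f : ℝ → ℝ, ContinuousOn f (Set.Icc 0 1) ∧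
      (∀ x ∈ Set.Icc (0:ℝ) 1, f x ∈ Set.Icc (0:ℝ) 1) ∧
      (∃ η > 0, ∀ x ∈ Set.Ioo (-η) η, f x = 0) ∧ u n = cfcₙ f b)
    (hunit : ∀ n, u (n + 1) * u n = u n)
    (happrox : Tendsto (fun n => u n * b) atTop (𝓝 b))
    (Δ : ℕ → B)
    (hΔ0 : Δ 0 = CFC.sqrt (u 0))
    (hΔ : ∀ n : ℕ, Δ (n + 1) = CFC.sqrt (u (n + 1) - u n))
    -- discretization
    (t : ℕ → ℝ) (h1 : ∀ n, 1 ≤ t n) :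
    ∀ a : A, ∃ S : 𝓜(ℂ, B),
      (∀ c : B,
        Tendsto (fun N => (∑ j ∈ Finset.range N,
            (DoubleCentralizer.coeHom (𝕜 := ℂ) (Δ j)) * φ (t j) a *
              (DoubleCentralizer.coeHom (𝕜 := ℂ) (Δ j))) *
            (DoubleCentralizer.coeHom (𝕜 := ℂ) c)) atTop
          (𝓝 (S * (DoubleCentralizer.coeHom (𝕜 := ℂ) c))) ∧
        Tendsto (fun N => (DoubleCentralizer.coeHom (𝕜 := ℂ) c) *
            ∑ j ∈ Finset.range N,
              (DoubleCentralizer.coeHom (𝕜 := ℂ) (Δ j)) * φ (t j) a *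
                (DoubleCentralizer.coeHom (𝕜 := ℂ) (Δ j))) atTop
          (𝓝 ((DoubleCentralizer.coeHom (𝕜 := ℂ) c) * S))) ∧
      ‖S‖ ≤ 3 * ⨆ j : ℕ, ‖φ (t j) a‖ := by
  intro a
  obtain ⟨M₀, hM₀⟩ := hbdd a
  have hm : ∀ j, ‖φ (t j) a‖ ≤ ⨆ j, ‖φ (t j) a‖ :=
    le_ciSup ⟨M₀, by rintro _ ⟨j, rfl⟩; exact hM₀ _ (h1 j)⟩
  have hu : ∀ n, 0 ≤ u n ∧ ‖u n‖ ≤ 1 := fun n => by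
    obtain ⟨f, -, hf, -, hfu⟩ := hfn n
    exact hfu ▸ cfcₙ_nonneg_and_norm_le_one hb_pos hb_norm hf
  have hux : ∀ x, Tendsto (u · * x) atTop (𝓝 x) :=
    tendsto_mul_of_dense_range_mul (K := 1) (fun n => (hu n).2) happrox <|
      hb_strict.mono <| by rintro _ ⟨x, rfl⟩; exact ⟨x * b, (mul_assoc _ _ _).symm⟩
  obtain rfl : Δ = fun j => CFC.sqrt (increment u j) := funext fun
    | 0 => hΔ0
    | j + 1 => hΔ j
  have hsq (j : ℕ) : CFC.sqrt (increment u j) * CFC.sqrt (increment u j) = increment u j :=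
    CFC.sqrt_mul_sqrt_self _ (increment_nonneg (hu 0).1 hmono j)
  obtain ⟨S, hS, hSM⟩ := (isBandedContraction_sqrt_increment (fun n => (hu n).1)
    (fun n => (hu n).2) hmono hunit).exists_tendsto_foldingSum hm
    (fun x => by simpa only [hsq] using tendsto_sum_range_increment_mul (hux x))
    (by simpa only [hsq] using norm_sum_range_increment_le_one fun n => (hu n).2)
  exact ⟨S, hS, hSM.trans (by linarith [(norm_nonneg _).trans (hm 0)])⟩

/-- Folding sums converge strictly: for an equi-continuous pointwise-bounded family
`φ_t : A → M(B)`, a unit sequence `{u_n}` (with associated `Δ_j`) and a discretization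
`{t_n}`, the series `Σ_j Δ_j φ_{t_j}(a) Δ_j` converges in the strict topology of `M(B)`
to an element of norm at most `3 sup_j ‖φ_{t_j}(a)‖`. -/
theorem folding_sum_strictly_convergent
    (A B : Type*) [NonUnitalCStarAlgebra A] [TopologicalSpace.SeparableSpace A]
    [NonUnitalCStarAlgebra B] [PartialOrder B] [StarOrderedRing B]
    (b : B) (hb_pos : 0 ≤ b) (hb_norm : ‖b‖ ≤ 1)
    (hb_strict : Dense (Set.range fun x : B => b * x * b))
    (φ : ℝ → A → 𝓜(ℂ, B))
    (hequi : Equicontinuous fun t : Set.Ici (1:ℝ) => φ t)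
    (hbdd : ∀ a, ∃ M : ℝ, ∀ t ∈ Set.Ici (1:ℝ), ‖φ t a‖ ≤ M)
    -- unit sequence
    (u : ℕ → B) (hmono : Monotone u)
    (hfn : ∀ n, ∃ f : ℝ → ℝ, ContinuousOn f (Set.Icc 0 1) ∧
      (∀ x ∈ Set.Icc (0:ℝ) 1, f x ∈ Set.Icc (0:ℝ) 1) ∧
      (∃ η > 0, ∀ x ∈ Set.Ioo (-η) η, f x = 0) ∧ u n = cfcₙ f b)
    (hunit : ∀ n, u (n + 1) * u n = u n)
    (happrox : Tendsto (fun n => u n * b) atTop (𝓝 b))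
    (Δ : ℕ → B)
    (hΔ0 : Δ 0 = CFC.sqrt (u 0))
    (hΔ : ∀ n : ℕ, Δ (n + 1) = CFC.sqrt (u (n + 1) - u n))
    -- discretization
    (t : ℕ → ℝ) (h1 : ∀ n, 1 ≤ t n) (htmono : Monotone t)
    (httop : Tendsto t atTop atTop)
    (htgap : Tendsto (fun n => t (n + 1) - t n) atTop (𝓝 0))
    (htle : ∀ n : ℕ, 1 ≤ n → t n ≤ n) :
    ∀ a : A, ∃ S : 𝓜(ℂ, B),
      (∀ c : B,
        Tendsto (fun N => (∑ j ∈ Finset.range N,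
            (DoubleCentralizer.coeHom (𝕜 := ℂ) (Δ j)) * φ (t j) a *
              (DoubleCentralizer.coeHom (𝕜 := ℂ) (Δ j))) *
            (DoubleCentralizer.coeHom (𝕜 := ℂ) c)) atTop
          (𝓝 (S * (DoubleCentralizer.coeHom (𝕜 := ℂ) c))) ∧
        Tendsto (fun N => (DoubleCentralizer.coeHom (𝕜 := ℂ) c) *
            ∑ j ∈ Finset.range N,
              (DoubleCentralizer.coeHom (𝕜 := ℂ) (Δ j)) * φ (t j) a *
                (DoubleCentralizer.coeHom (𝕜 := ℂ) (Δ j))) atTop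
          (𝓝 ((DoubleCentralizer.coeHom (𝕜 := ℂ) c) * S))) ∧
      ‖S‖ ≤ 3 * ⨆ j : ℕ, ‖φ (t j) a‖ :=
  folding_sum_strictly_convergent_general A B b hb_pos hb_norm hb_strict φ hbdd u hmono hfn hunit
    happrox Δ hΔ0 hΔ t h1
end
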